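/- arXiv:1809.05377 — 5 statements merged into one kernel-verified Lean document; each statement's English description precedes it below -/
import Mathlib

section
/- Let G be a finite connected simple graph with at least one edge. Then the matching number ν(G) equals the induced matching number ν₀(G) if and only if G is one of the following: (i) a star; (ii) a star triangle; or (iii) a graph consisting of a connected bipartite graph with bipartition (X, Y) such that every vertex x ∈ X is incident to at least one leaf edge, together with possibly some pendant triangles attached to vertices of Y. -/
/-!
Say a vertex is exposed if no edge of the matching `M` covers it. When `M` is an induced matching,
a covered vertex is adjacent only to its mate and to exposed vertices. If moreover `M` admits no
augmenting path of length one or three, any two edges of `G` meeting a common edge of `M`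
intersect, so no matching is larger than `M` and `ν = ν₀`. Conversely, if `ν = ν₀` then a maximum
induced matching is a maximum matching, so it has no augmenting path at all.

For such an `M`, each edge of `M` is a pendant edge or the base of a triangle whose apex is the
only exposed neighbour of both its ends. By connectivity, `G` is a single edge if some edge of `M`
has no exposed neighbour, a star triangle (all apexes coincide) if every covered vertex has one, and
otherwise a Cameron–Walker graph whose `X` consists of the non-leaf ends of the pendant edges of
`M`. Conversely, each of the three families carries such a matching: a centre with one leaf, the
triangle bases, or the vertices of `X` each with one of its leaves together with the bases of the
pendant triangles.
-/

open scoped Classical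

namespace SimpleGraph

variable {V : Type*}

/-- A set of edges of `G` forming a matching: pairwise disjoint edges of `G`. -/
def IsMatchingSet (G : SimpleGraph V) (M : Finset (Sym2 V)) : Prop :=
  (∀ e ∈ M, e ∈ G.edgeSet) ∧
  ∀ e ∈ M, ∀ f ∈ M, e ≠ f → ∀ v : V, v ∈ e → v ∉ f

/-- An induced matching: a matching such that no edge of `G` joins two distinct
edges of the matching. -/
def IsInducedMatchingSet (G : SimpleGraph V) (M : Finset (Sym2 V)) : Prop :=
  G.IsMatchingSet M ∧
  ∀ e ∈ M, ∀ f ∈ M, e ≠ f → ∀ u v : V, u ∈ e → v ∈ f → ¬ G.Adj u v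

/-- The matching number of `G`: the maximum size of a matching. -/
noncomputable def matchingNumber [Fintype V] (G : SimpleGraph V) : ℕ :=
  sSup {n | ∃ M : Finset (Sym2 V), G.IsMatchingSet M ∧ M.card = n}

/-- The induced matching number of `G`: the maximum size of an induced matching. -/
noncomputable def inducedMatchingNumber [Fintype V] (G : SimpleGraph V) : ℕ :=
  sSup {n | ∃ M : Finset (Sym2 V), G.IsInducedMatchingSet M ∧ M.card = n}

/-- `G` is a star `K_{1,n}` (with `n ≥ 1`): there is a center `c` adjacent to
all other vertices, and these are the only edges. -/
def IsStarGraph (G : SimpleGraph V) : Prop :=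
  ∃ c : V, (∃ v : V, v ≠ c) ∧
    ∀ u v : V, G.Adj u v ↔ ((u = c ∧ v ≠ c) ∨ (v = c ∧ u ≠ c))

/-- `G` is a star triangle: finitely many (at least one) triangles sharing exactly one
common vertex `c` and otherwise pairwise vertex-disjoint.  The vertices other than `c`
are paired up by a fixed-point-free involution `p`, each pair forming a triangle with
`c`, and these are the only edges. -/
def IsStarTriangleGraph (G : SimpleGraph V) : Prop :=
  ∃ (c : V) (p : V → V),
    (∃ v : V, v ≠ c) ∧
    (∀ v : V, v ≠ c → p v ≠ v ∧ p v ≠ c ∧ p (p v) = v) ∧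
    (∀ u v : V, G.Adj u v ↔
      ((u = c ∧ v ≠ c) ∨ (v = c ∧ u ≠ c) ∨ (u ≠ c ∧ v ≠ c ∧ v = p u)))

/-- `G` consists of a connected bipartite graph with bipartition `(X, Y)` such that every
vertex of `X` is incident to at least one leaf edge, together with possibly some pendant
triangles attached to vertices of `Y`.  The pendant-triangle vertices form the set `Z`,
paired by the involution `pair`, each pair being attached to the vertex `att z ∈ Y`;
a pendant-triangle vertex `z` is adjacent exactly to `pair z` and `att z`. -/
def IsCWBipartiteWithPendantTriangles (G : SimpleGraph V) : Prop :=
  ∃ (X Y Z : Set V) (pair att : V → V),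
    Disjoint X Y ∧ Disjoint X Z ∧ Disjoint Y Z ∧
    X ∪ Y ∪ Z = Set.univ ∧
    X.Nonempty ∧
    (∀ u ∈ X, ∀ v ∈ X, ¬ G.Adj u v) ∧
    (∀ u ∈ Y, ∀ v ∈ Y, ¬ G.Adj u v) ∧
    (∀ z ∈ Z, pair z ∈ Z ∧ pair z ≠ z ∧ pair (pair z) = z ∧ att z ∈ Y ∧
      att (pair z) = att z ∧ ∀ u : V, G.Adj z u ↔ (u = pair z ∨ u = att z)) ∧
    (∀ x ∈ X, ∃ y ∈ Y, G.neighborSet y = {x}) ∧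
    (G.induce (X ∪ Y)).Connected

section Matching

variable {G : SimpleGraph V} {M N : Finset (Sym2 V)} {a b u v w : V}

def coveredVerts (M : Finset (Sym2 V)) : Set V := {v | ∃ e ∈ M, v ∈ e}

lemma mem_coveredVerts_of_mk_mem (h : s(a, b) ∈ M) : a ∈ coveredVerts M :=
  ⟨_, h, Sym2.mem_mk_left a b⟩

lemma coveredVerts_mono (h : N ⊆ M) : coveredVerts N ⊆ coveredVerts M :=
  fun _ ⟨e, he, hve⟩ => ⟨e, h he, hve⟩

lemma mem_coveredVerts_insert {e : Sym2 V} :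
    v ∈ coveredVerts (insert e M) ↔ v ∈ e ∨ v ∈ coveredVerts M := by
  simp [coveredVerts]

lemma IsMatchingSet.adj (hM : G.IsMatchingSet M) (h : s(a, b) ∈ M) : G.Adj a b :=
  hM.1 _ h

lemma IsMatchingSet.eq_of_mem (hM : G.IsMatchingSet M) {e f : Sym2 V} (he : e ∈ M) (hf : f ∈ M)
    (hve : v ∈ e) (hvf : v ∈ f) : e = f := by
  by_contra hef
  exact hM.2 e he f hf hef v hve hvf

lemma IsMatchingSet.mono (hM : G.IsMatchingSet M) (h : N ⊆ M) : G.IsMatchingSet N :=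
  ⟨fun e he => hM.1 e (h he), fun e he f hf => hM.2 e (h he) f (h hf)⟩

lemma IsMatchingSet.insert_mk (hM : G.IsMatchingSet M) (hab : G.Adj a b)
    (ha : a ∉ coveredVerts M) (hb : b ∉ coveredVerts M) : G.IsMatchingSet (insert s(a, b) M) := by
  have hfree : ∀ f ∈ M, ∀ x ∈ s(a, b), x ∉ f := by
    intro f hf x hx hxf
    rcases Sym2.mem_iff.1 hx with rfl | rfl
    exacts [ha ⟨f, hf, hxf⟩, hb ⟨f, hf, hxf⟩]
  refine ⟨fun e he => ?_, fun e he f hf hef x hxe hxf => ?_⟩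
  · rcases Finset.mem_insert.1 he with rfl | he
    exacts [hab, hM.1 e he]
  rcases Finset.mem_insert.1 he with rfl | he <;> rcases Finset.mem_insert.1 hf with rfl | hf
  · exact hef rfl
  · exact hfree f hf x hxe hxf
  · exact hfree e he x hxf hxe
  · exact hM.2 e he f hf hef x hxe hxf

lemma card_insert_of_notMem_coveredVerts (ha : a ∉ coveredVerts M) :
    (insert s(a, b) M).card = M.card + 1 :=
  Finset.card_insert_of_notMem fun h => ha (mem_coveredVerts_of_mk_mem h)

lemma IsInducedMatchingSet.eq_of_adj (hM : G.IsInducedMatchingSet M) (hab : s(a, b) ∈ M)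
    (hu : u ∈ coveredVerts M) (hau : G.Adj a u) : u = b := by
  obtain ⟨f, hf, huf⟩ := hu
  obtain rfl : f = s(a, b) := by
    by_contra hne
    exact hM.2 _ hab f hf (Ne.symm hne) a u (Sym2.mem_mk_left a b) huf hau
  rcases Sym2.mem_iff.1 huf with rfl | rfl
  exacts [absurd hau G.irrefl, rfl]

/-- `M` admits no augmenting path of length one or three. -/
structure NoShortAugmentingPath (G : SimpleGraph V) (M : Finset (Sym2 V)) : Prop where
  not_adj : ∀ ⦃u w⦄, u ∉ coveredVerts M → w ∉ coveredVerts M → ¬ G.Adj u w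
  eq_of_adj : ∀ ⦃a b u w⦄, s(a, b) ∈ M → u ∉ coveredVerts M → w ∉ coveredVerts M →
    G.Adj u a → G.Adj w b → u = w

lemma IsMatchingSet.noShortAugmentingPath_of_forall_card_le (hM : G.IsMatchingSet M)
    (hmax : ∀ N, G.IsMatchingSet N → N.card ≤ M.card) : G.NoShortAugmentingPath M where
  not_adj u w hu hw huw := by
    have := hmax _ (hM.insert_mk huw hu hw)
    rw [card_insert_of_notMem_coveredVerts hu] at this
    omega
  eq_of_adj a b u w hab hu hw hua hwb := by
    by_contra hne
    set M' := M.erase s(a, b)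
    have hM' : G.IsMatchingSet M' := hM.mono (Finset.erase_subset _ _)
    have hsub : coveredVerts M' ⊆ coveredVerts M := coveredVerts_mono (Finset.erase_subset _ _)
    have hfree : ∀ x ∈ s(a, b), x ∉ coveredVerts M' := fun x hx ⟨f, hf, hxf⟩ =>
      Finset.ne_of_mem_erase hf (hM.eq_of_mem (Finset.mem_of_mem_erase hf) hab hxf hx)
    have ha : a ∈ coveredVerts M := mem_coveredVerts_of_mk_mem hab
    have hb : b ∈ coveredVerts M := mem_coveredVerts_of_mk_mem (Sym2.eq_swap ▸ hab)
    have hM'' := hM'.insert_mk hua (fun h => hu (hsub h)) (hfree a (Sym2.mem_mk_left a b))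
    have hw' : w ∉ coveredVerts (insert s(u, a) M') := by
      rw [mem_coveredVerts_insert, Sym2.mem_iff]
      rintro ((rfl | rfl) | h)
      exacts [hne rfl, hw ha, hw (hsub h)]
    have hb' : b ∉ coveredVerts (insert s(u, a) M') := by
      rw [mem_coveredVerts_insert, Sym2.mem_iff]
      rintro ((rfl | rfl) | h)
      exacts [hu hb, G.irrefl (hM.adj hab), hfree b (Sym2.mem_mk_right a b) h]
    have := hmax _ (hM''.insert_mk hwb hw' hb')
    rw [card_insert_of_notMem_coveredVerts hw', card_insert_of_notMem_coveredVerts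
      (fun h => hu (hsub h)), Finset.card_erase_of_mem hab] at this
    have := Finset.card_pos.2 ⟨_, hab⟩
    omega

lemma NoShortAugmentingPath.exists_mem_inter (hM : G.IsInducedMatchingSet M)
    (hA : G.NoShortAugmentingPath M) (hab : s(a, b) ∈ M) {e f : Sym2 V} (he : e ∈ G.edgeSet)
    (hf : f ∈ G.edgeSet) (hae : a ∈ e) (hbf : b ∈ f) : ∃ v, v ∈ e ∧ v ∈ f := by
  by_contra! hdisj
  obtain ⟨u, rfl⟩ := Sym2.mem_iff_exists.1 hae
  obtain ⟨w, rfl⟩ := Sym2.mem_iff_exists.1 hbf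
  -- both free ends are exposed, so `u - a - b - w` would be an augmenting path
  have hu : u ∉ coveredVerts M := fun hu =>
    hdisj b (hM.eq_of_adj hab hu he ▸ Sym2.mem_mk_right a u) (Sym2.mem_mk_left b w)
  have hw : w ∉ coveredVerts M := fun hw =>
    hdisj a (Sym2.mem_mk_left a u)
      (hM.eq_of_adj (Sym2.eq_swap ▸ hab) hw hf ▸ Sym2.mem_mk_right b w)
  exact hdisj u (Sym2.mem_mk_right a u)
    (hA.eq_of_adj hab hu hw (G.adj_symm he) (G.adj_symm hf) ▸ Sym2.mem_mk_right b w)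

lemma NoShortAugmentingPath.card_le (hM : G.IsInducedMatchingSet M)
    (hA : G.NoShortAugmentingPath M) (hN : G.IsMatchingSet N) : N.card ≤ M.card := by
  refine Finset.card_le_card_of_forall_subsingleton (fun e g => ∃ v, v ∈ g ∧ v ∈ e)
    (fun e he => ?_) (fun g hg e ⟨he, x, hxg, hxe⟩ f ⟨hf, y, hyg, hyf⟩ => ?_)
  · induction e using Sym2.ind with
    | _ x y =>
      by_cases hx : x ∈ coveredVerts M
      · obtain ⟨g, hg, hxg⟩ := hx
        exact ⟨g, hg, x, hxg, Sym2.mem_mk_left x y⟩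
      by_cases hy : y ∈ coveredVerts M
      · obtain ⟨g, hg, hyg⟩ := hy
        exact ⟨g, hg, y, hyg, Sym2.mem_mk_right x y⟩
      exact absurd (hN.adj he) (hA.not_adj hx hy)
  induction g using Sym2.ind with
  | _ a b =>
    have hmeet : ∃ v, v ∈ e ∧ v ∈ f := by
      rcases Sym2.mem_iff.1 hxg with rfl | rfl <;> rcases Sym2.mem_iff.1 hyg with rfl | rfl
      · exact ⟨_, hxe, hyf⟩
      · exact hA.exists_mem_inter hM hg (hN.1 e he) (hN.1 f hf) hxe hyf
      · obtain ⟨v, hvf, hve⟩ := hA.exists_mem_inter hM hg (hN.1 f hf) (hN.1 e he) hyf hxe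
        exact ⟨v, hve, hvf⟩
      · exact ⟨_, hxe, hyf⟩
    obtain ⟨v, hve, hvf⟩ := hmeet
    exact hN.eq_of_mem he hf hve hvf

end Matching

section MatchingNumber

variable [Fintype V] {G : SimpleGraph V} {M N : Finset (Sym2 V)}

lemma bddAbove_cards (P : Finset (Sym2 V) → Prop) : BddAbove {n | ∃ M, P M ∧ M.card = n} :=
  ⟨Fintype.card (Sym2 V), by rintro _ ⟨M, -, rfl⟩; exact M.card_le_univ⟩

lemma card_le_matchingNumber (hN : G.IsMatchingSet N) : N.card ≤ G.matchingNumber :=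
  le_csSup (bddAbove_cards _) ⟨N, hN, rfl⟩

lemma card_le_inducedMatchingNumber (hN : G.IsInducedMatchingSet N) :
    N.card ≤ G.inducedMatchingNumber :=
  le_csSup (bddAbove_cards _) ⟨N, hN, rfl⟩

lemma matchingNumber_le {k : ℕ} (h : ∀ N, G.IsMatchingSet N → N.card ≤ k) :
    G.matchingNumber ≤ k :=
  csSup_le' (by rintro _ ⟨N, hN, rfl⟩; exact h N hN)

lemma exists_isInducedMatchingSet_card_eq :
    ∃ M, G.IsInducedMatchingSet M ∧ M.card = G.inducedMatchingNumber :=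
  Nat.sSup_mem (s := {n | ∃ M, G.IsInducedMatchingSet M ∧ M.card = n})
    ⟨0, ∅, by simp [IsInducedMatchingSet, IsMatchingSet], rfl⟩ (bddAbove_cards _)

lemma inducedMatchingNumber_le_matchingNumber : G.inducedMatchingNumber ≤ G.matchingNumber := by
  obtain ⟨M, hM, hcard⟩ := exists_isInducedMatchingSet_card_eq (G := G)
  exact hcard ▸ card_le_matchingNumber hM.1

theorem matchingNumber_eq_inducedMatchingNumber_iff :
    G.matchingNumber = G.inducedMatchingNumber ↔
      ∃ M, G.IsInducedMatchingSet M ∧ G.NoShortAugmentingPath M := by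
  constructor
  · intro h
    obtain ⟨M, hM, hcard⟩ := exists_isInducedMatchingSet_card_eq (G := G)
    refine ⟨M, hM, hM.1.noShortAugmentingPath_of_forall_card_le fun N hN => ?_⟩
    exact hcard ▸ h ▸ card_le_matchingNumber hN
  · rintro ⟨M, hM, hA⟩
    exact le_antisymm ((matchingNumber_le fun N hN => hA.card_le hM hN).trans
      (card_le_inducedMatchingNumber hM)) inducedMatchingNumber_le_matchingNumber

end MatchingNumber

section Connectivity

variable {G : SimpleGraph V}

lemma Preconnected.forall_of_adj {P : V → Prop} (hG : G.Preconnected)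
    (hP : ∀ u v, G.Adj u v → P u → P v) {u : V} (hu : P u) (v : V) : P v := by
  induction (reachable_iff_reflTransGen u v).1 (hG u v) with
  | refl => exact hu
  | tail _ hadj ih => exact hP _ _ hadj ih

lemma Connected.induce_of_retraction {W : Set V} (hG : G.Connected) (f : V → V)
    (hfW : ∀ v, f v ∈ W) (hfix : ∀ w ∈ W, f w = w)
    (hf : ∀ u v, G.Adj u v → f u = f v ∨ G.Adj (f u) (f v)) : (G.induce W).Connected := by
  let g : V → W := fun v => ⟨f v, hfW v⟩
  have hg : ∀ w : W, g w = w := fun w => Subtype.ext (hfix w w.2)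
  refine (connected_iff _).2 ⟨fun u v => ?_, ⟨g hG.nonempty.some⟩⟩
  rw [← hg u, ← hg v, reachable_iff_reflTransGen]
  refine ((reachable_iff_reflTransGen _ _).1 (hG.preconnected u v)).lift' g fun a b hab => ?_
  show Relation.ReflTransGen _ (g a) (g b)
  rcases hf a b hab with h | h
  · exact (Subtype.ext h : g a = g b) ▸ Relation.ReflTransGen.refl
  · exact Relation.ReflTransGen.single h

end Connectivity

section Structure

variable {G : SimpleGraph V} {M : Finset (Sym2 V)} {u v w : V}

noncomputable def mate (M : Finset (Sym2 V)) (v : V) : V :=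
  if h : ∃ w, s(v, w) ∈ M then h.choose else v

lemma mk_mate_mem (hv : v ∈ coveredVerts M) : s(v, mate M v) ∈ M := by
  obtain ⟨e, he, hve⟩ := hv
  obtain ⟨w, rfl⟩ := Sym2.mem_iff_exists.1 hve
  have h : ∃ w, s(v, w) ∈ M := ⟨w, he⟩
  rw [mate, dif_pos h]
  exact h.choose_spec

lemma mate_mem_coveredVerts (hv : v ∈ coveredVerts M) : mate M v ∈ coveredVerts M :=
  ⟨_, mk_mate_mem hv, Sym2.mem_mk_right _ _⟩

lemma IsMatchingSet.adj_mate (hM : G.IsMatchingSet M) (hv : v ∈ coveredVerts M) :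
    G.Adj v (mate M v) :=
  hM.adj (mk_mate_mem hv)

lemma IsMatchingSet.mate_mate (hM : G.IsMatchingSet M) (hv : v ∈ coveredVerts M) :
    mate M (mate M v) = v := by
  have h : s(mate M v, v) ∈ M := Sym2.eq_swap ▸ mk_mate_mem hv
  exact Sym2.congr_right.1 (hM.eq_of_mem (mk_mate_mem (mate_mem_coveredVerts hv)) h
    (Sym2.mem_mk_left _ _) (Sym2.mem_mk_left _ _))

lemma IsInducedMatchingSet.eq_mate_of_adj (hM : G.IsInducedMatchingSet M)
    (hv : v ∈ coveredVerts M) (hw : w ∈ coveredVerts M) (hvw : G.Adj v w) : w = mate M v :=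
  hM.eq_of_adj (mk_mate_mem hv) hw hvw

def HasExposedNeighbor (G : SimpleGraph V) (M : Finset (Sym2 V)) (v : V) : Prop :=
  ∃ u, u ∉ coveredVerts M ∧ G.Adj v u

noncomputable def exposedNeighbor (G : SimpleGraph V) (M : Finset (Sym2 V)) (v : V) : V :=
  if h : G.HasExposedNeighbor M v then h.choose else v

lemma HasExposedNeighbor.exposedNeighbor_spec (h : G.HasExposedNeighbor M v) :
    G.exposedNeighbor M v ∉ coveredVerts M ∧ G.Adj v (G.exposedNeighbor M v) := by
  rw [exposedNeighbor, dif_pos h]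
  exact h.choose_spec

lemma IsInducedMatchingSet.adj_iff_eq_mate (hM : G.IsInducedMatchingSet M)
    (hv : v ∈ coveredVerts M) (hn : ¬ G.HasExposedNeighbor M v) : G.Adj v u ↔ u = mate M v := by
  refine ⟨fun hvu => ?_, fun h => h ▸ hM.1.adj_mate hv⟩
  by_contra hu
  exact hn ⟨u, fun hu' => hu (hM.eq_mate_of_adj hv hu' hvu), hvu⟩

def triangleVerts (G : SimpleGraph V) (M : Finset (Sym2 V)) : Set V :=
  {v | v ∈ coveredVerts M ∧ G.HasExposedNeighbor M v ∧ G.HasExposedNeighbor M (mate M v)}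

lemma IsMatchingSet.mate_mem_triangleVerts (hM : G.IsMatchingSet M)
    (hv : v ∈ G.triangleVerts M) : mate M v ∈ G.triangleVerts M :=
  ⟨mate_mem_coveredVerts hv.1, hv.2.2, (hM.mate_mate hv.1).symm ▸ hv.2.1⟩

lemma NoShortAugmentingPath.exposedNeighbor_mate (hA : G.NoShortAugmentingPath M)
    (hv : v ∈ G.triangleVerts M) :
    G.exposedNeighbor M (mate M v) = G.exposedNeighbor M v := by
  obtain ⟨hv, hn, hn'⟩ := hv
  exact (hA.eq_of_adj (mk_mate_mem hv) hn.exposedNeighbor_spec.1 hn'.exposedNeighbor_spec.1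
    (G.adj_symm hn.exposedNeighbor_spec.2) (G.adj_symm hn'.exposedNeighbor_spec.2)).symm

lemma adj_iff_of_mem_triangleVerts (hM : G.IsInducedMatchingSet M)
    (hA : G.NoShortAugmentingPath M) (hv : v ∈ G.triangleVerts M) :
    G.Adj v u ↔ u = mate M v ∨ u = G.exposedNeighbor M v := by
  refine ⟨fun hvu => ?_, ?_⟩
  · by_cases hu : u ∈ coveredVerts M
    · exact Or.inl (hM.eq_mate_of_adj hv.1 hu hvu)
    have hn := hv.2.2.exposedNeighbor_spec
    rw [← hA.exposedNeighbor_mate hv]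
    exact Or.inr (hA.eq_of_adj (mk_mate_mem hv.1) hu hn.1 (G.adj_symm hvu) (G.adj_symm hn.2))
  · rintro (rfl | rfl)
    exacts [hM.1.adj_mate hv.1, hv.2.1.exposedNeighbor_spec.2]

noncomputable def triangleCollapse (G : SimpleGraph V) (M : Finset (Sym2 V)) (v : V) : V :=
  if v ∈ G.triangleVerts M then G.exposedNeighbor M v else v

lemma triangleCollapse_notMem_triangleVerts (v : V) :
    G.triangleCollapse M v ∉ G.triangleVerts M := by
  unfold triangleCollapse
  split_ifs with hv
  exacts [fun h => hv.2.1.exposedNeighbor_spec.1 h.1, hv]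

lemma triangleCollapse_of_notMem (hv : v ∉ G.triangleVerts M) : G.triangleCollapse M v = v :=
  if_neg hv

lemma triangleCollapse_eq_of_adj (hM : G.IsInducedMatchingSet M) (hA : G.NoShortAugmentingPath M)
    (hu : u ∈ G.triangleVerts M) (huv : G.Adj u v) :
    G.triangleCollapse M u = G.triangleCollapse M v := by
  rw [triangleCollapse, if_pos hu]
  rcases (adj_iff_of_mem_triangleVerts hM hA hu).1 huv with rfl | rfl
  · rw [triangleCollapse, if_pos (hM.1.mate_mem_triangleVerts hu), hA.exposedNeighbor_mate hu]
  · exact (triangleCollapse_of_notMem fun h => hu.2.1.exposedNeighbor_spec.1 h.1).symm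

lemma triangleCollapse_eq_or_adj (hM : G.IsInducedMatchingSet M) (hA : G.NoShortAugmentingPath M)
    (huv : G.Adj u v) : G.triangleCollapse M u = G.triangleCollapse M v ∨
      G.Adj (G.triangleCollapse M u) (G.triangleCollapse M v) := by
  by_cases hu : u ∈ G.triangleVerts M
  · exact Or.inl (triangleCollapse_eq_of_adj hM hA hu huv)
  by_cases hv : v ∈ G.triangleVerts M
  · exact Or.inl (triangleCollapse_eq_of_adj hM hA hv (G.adj_symm huv)).symm
  rw [triangleCollapse_of_notMem hu, triangleCollapse_of_notMem hv]
  exact Or.inr huv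

lemma isStarGraph_of_not_hasExposedNeighbor (hG : G.Preconnected) (hM : G.IsInducedMatchingSet M)
    (hv : v ∈ coveredVerts M) (h₁ : ¬ G.HasExposedNeighbor M v)
    (h₂ : ¬ G.HasExposedNeighbor M (mate M v)) : G.IsStarGraph := by
  have hadj₁ : ∀ u, G.Adj v u ↔ u = mate M v := fun u => hM.adj_iff_eq_mate hv h₁
  have hadj₂ : ∀ u, G.Adj (mate M v) u ↔ u = v := fun u => by
    simpa only [hM.1.mate_mate hv] using hM.adj_iff_eq_mate (mate_mem_coveredVerts hv) h₂
  have hne : mate M v ≠ v := (hM.1.adj_mate hv).ne'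
  have hall : ∀ u, u = v ∨ u = mate M v := by
    refine hG.forall_of_adj ?_ (Or.inl rfl)
    rintro x y hxy (rfl | rfl)
    exacts [Or.inr ((hadj₁ y).1 hxy), Or.inl ((hadj₂ y).1 hxy)]
  refine ⟨v, ⟨mate M v, hne⟩, fun x y => ?_⟩
  rcases hall x with rfl | rfl <;> rcases hall y with rfl | rfl <;> simp [hadj₁, hadj₂, hne]

lemma isStarTriangleGraph_of_forall_hasExposedNeighbor (hG : G.Preconnected)
    (hM : G.IsInducedMatchingSet M) (hA : G.NoShortAugmentingPath M) (hv : v ∈ coveredVerts M)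
    (hall : ∀ v ∈ coveredVerts M, G.HasExposedNeighbor M v) : G.IsStarTriangleGraph := by
  have hZ : ∀ v ∈ coveredVerts M, v ∈ G.triangleVerts M := fun v hv =>
    ⟨hv, hall v hv, hall _ (mate_mem_coveredVerts hv)⟩
  have hexp : ∀ v, G.triangleCollapse M v ∉ coveredVerts M := fun v h =>
    triangleCollapse_notMem_triangleVerts v (hZ _ h)
  -- the apexes of all the triangles coincide
  set c := G.triangleCollapse M v
  have hc_exp : c ∉ coveredVerts M := hexp v
  have hc : ∀ w, G.triangleCollapse M w = c := by
    refine hG.forall_of_adj (P := fun w => G.triangleCollapse M w = c) (fun x y hxy hx => ?_) rfl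
    exact ((triangleCollapse_eq_or_adj hM hA hxy).resolve_right (hA.not_adj (hexp x) (hexp y))) ▸ hx
  have hcov : ∀ w ≠ c, w ∈ coveredVerts M := fun w hw => by
    by_contra h
    exact hw (triangleCollapse_of_notMem (fun h' => h h'.1) ▸ hc w)
  have hadj_c : ∀ w ≠ c, G.Adj w c := fun w hw => by
    have := hc w
    rw [triangleCollapse, if_pos (hZ w (hcov w hw))] at this
    exact this ▸ (hall w (hcov w hw)).exposedNeighbor_spec.2
  refine ⟨c, mate M, ⟨v, fun h => hc_exp (h ▸ hv)⟩, fun w hw => ?_, fun x y => ?_⟩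
  · exact ⟨(hM.1.adj_mate (hcov w hw)).ne', fun h => hc_exp (h ▸ mate_mem_coveredVerts (hcov w hw)),
      hM.1.mate_mate (hcov w hw)⟩
  constructor
  · intro hxy
    rcases eq_or_ne x c with rfl | hx
    · exact Or.inl ⟨rfl, hxy.ne'⟩
    rcases eq_or_ne y c with rfl | hy
    · exact Or.inr (Or.inl ⟨rfl, hx⟩)
    exact Or.inr (Or.inr ⟨hx, hy, hM.eq_mate_of_adj (hcov x hx) (hcov y hy) hxy⟩)
  · rintro (⟨rfl, hy⟩ | ⟨rfl, hx⟩ | ⟨hx, -, rfl⟩)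
    exacts [G.adj_symm (hadj_c y hy), hadj_c x hx, hM.1.adj_mate (hcov x hx)]

lemma isCWBipartiteWithPendantTriangles_of_not_hasExposedNeighbor (hG : G.Connected)
    (hM : G.IsInducedMatchingSet M) (hA : G.NoShortAugmentingPath M) (hv : v ∈ coveredVerts M)
    (h₁ : ¬ G.HasExposedNeighbor M v)
    (hmate : ∀ v ∈ coveredVerts M, ¬ G.HasExposedNeighbor M v → G.HasExposedNeighbor M (mate M v)) :
    G.IsCWBipartiteWithPendantTriangles := by
  set Z := G.triangleVerts M
  set X : Set V := {v | v ∈ coveredVerts M ∧ G.HasExposedNeighbor M v ∧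
    ¬ G.HasExposedNeighbor M (mate M v)}
  set Y : Set V := {v | v ∉ coveredVerts M ∨ ¬ G.HasExposedNeighbor M v}
  have hXY : X ∪ Y = Zᶜ := by
    ext v
    simp only [X, Y, Z, triangleVerts, Set.mem_union, Set.mem_ofPred_eq, Set.mem_compl_iff]
    tauto
  have hYexp : ∀ u ∈ Y, ∀ w ∉ coveredVerts M, ¬ G.Adj u w := by
    rintro u (hu | hu) w hw huw
    exacts [hA.not_adj hu hw huw, hu ⟨w, hw, huw⟩]
  refine ⟨X, Y, Z, mate M, G.exposedNeighbor M, ?_, ?_, ?_, ?_, ?_, ?_, ?_, ?_, ?_, ?_⟩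
  · exact Set.disjoint_left.2 fun v hX hY => hY.elim (· hX.1) (· hX.2.1)
  · exact Set.disjoint_left.2 fun v hX hZ => hX.2.2 hZ.2.2
  · exact Set.disjoint_left.2 fun v hY hZ => hY.elim (· hZ.1) (· hZ.2.1)
  · rw [hXY, Set.compl_union_self]
  · exact ⟨mate M v, mate_mem_coveredVerts hv, hmate v hv h₁, (hM.1.mate_mate hv).symm ▸ h₁⟩
  · exact fun u hu w hw huw => hu.2.2 (hM.eq_mate_of_adj hu.1 hw.1 huw ▸ hw.2.1)
  · intro u hu w hw huw
    by_cases hu' : u ∈ coveredVerts M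
    · by_cases hw' : w ∈ coveredVerts M
      · have hu'' := hu.resolve_left (not_not.2 hu')
        exact hw.resolve_left (not_not.2 hw') (hM.eq_mate_of_adj hu' hw' huw ▸ hmate u hu' hu'')
      · exact hYexp u hu w hw' huw
    · exact hYexp w hw u hu' (G.adj_symm huw)
  · intro z hz
    exact ⟨hM.1.mate_mem_triangleVerts hz, (hM.1.adj_mate hz.1).ne', hM.1.mate_mate hz.1,
      Or.inl hz.2.1.exposedNeighbor_spec.1, hA.exposedNeighbor_mate hz,
      fun u => adj_iff_of_mem_triangleVerts hM hA hz⟩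
  · rintro x ⟨hx, -, hn⟩
    refine ⟨mate M x, Or.inr hn, Set.ext fun u => ?_⟩
    simpa only [mem_neighborSet, Set.mem_singleton_iff, hM.1.mate_mate hx] using
      hM.adj_iff_eq_mate (mate_mem_coveredVerts hx) hn
  · rw [hXY]
    exact hG.induce_of_retraction _ triangleCollapse_notMem_triangleVerts
      (fun _ => triangleCollapse_of_notMem) (fun _ _ => triangleCollapse_eq_or_adj hM hA)

theorem isStarGraph_or_isStarTriangleGraph_or_isCWBipartiteWithPendantTriangles
    (hG : G.Connected) (hne : G.edgeSet.Nonempty) (hM : G.IsInducedMatchingSet M)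
    (hA : G.NoShortAugmentingPath M) :
    G.IsStarGraph ∨ G.IsStarTriangleGraph ∨ G.IsCWBipartiteWithPendantTriangles := by
  obtain ⟨v₀, hv₀⟩ : ∃ v, v ∈ coveredVerts M := by
    obtain ⟨e, he⟩ := hne
    induction e using Sym2.ind with
    | _ x y =>
      by_contra! h
      exact hA.not_adj (h x) (h y) he
  by_cases hstar : ∃ v ∈ coveredVerts M, ¬ G.HasExposedNeighbor M v ∧
      ¬ G.HasExposedNeighbor M (mate M v)
  · obtain ⟨v, hv, h₁, h₂⟩ := hstar
    exact Or.inl (isStarGraph_of_not_hasExposedNeighbor hG.preconnected hM hv h₁ h₂)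
  push Not at hstar
  by_cases htri : ∀ v ∈ coveredVerts M, G.HasExposedNeighbor M v
  · exact Or.inr (Or.inl (isStarTriangleGraph_of_forall_hasExposedNeighbor hG.preconnected hM hA
      hv₀ htri))
  push Not at htri
  obtain ⟨v, hv, h₁⟩ := htri
  exact Or.inr (Or.inr (isCWBipartiteWithPendantTriangles_of_not_hasExposedNeighbor hG hM hA hv h₁
    hstar))

end Structure

section Realization

variable [Fintype V] {G : SimpleGraph V} {U : Set V} {a b v w : V}

noncomputable def edgeFinsetWithin (G : SimpleGraph V) (U : Set V) : Finset (Sym2 V) :=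
  {e | e ∈ G.edgeSet ∧ ∀ v ∈ e, v ∈ U}

lemma mk_mem_edgeFinsetWithin : s(a, b) ∈ G.edgeFinsetWithin U ↔ G.Adj a b ∧ a ∈ U ∧ b ∈ U := by
  simp [edgeFinsetWithin]

lemma mem_of_mem_edgeFinsetWithin (hU : ∀ v ∈ U, ∃! w, w ∈ U ∧ G.Adj v w) {e : Sym2 V}
    (he : e ∈ G.edgeFinsetWithin U) (hve : v ∈ e) (hw : w ∈ U) (hvw : G.Adj v w) : w ∈ e := by
  obtain ⟨a, rfl⟩ := Sym2.mem_iff_exists.1 hve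
  obtain ⟨hva, hv, ha⟩ := mk_mem_edgeFinsetWithin.1 he
  exact (hU v hv).unique ⟨hw, hvw⟩ ⟨ha, hva⟩ ▸ Sym2.mem_mk_right v a

lemma isInducedMatchingSet_edgeFinsetWithin (hU : ∀ v ∈ U, ∃! w, w ∈ U ∧ G.Adj v w) :
    G.IsInducedMatchingSet (G.edgeFinsetWithin U) := by
  have hmatch : G.IsMatchingSet (G.edgeFinsetWithin U) := by
    refine ⟨fun e he => (Finset.mem_filter.1 he).2.1, fun e he f hf hef v hve hvf => hef ?_⟩
    obtain ⟨w, rfl⟩ := Sym2.mem_iff_exists.1 hvf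
    obtain ⟨hvw, -, hw⟩ := mk_mem_edgeFinsetWithin.1 hf
    obtain ⟨a, rfl⟩ := Sym2.mem_iff_exists.1 hve
    rw [(Sym2.mem_iff.1 (mem_of_mem_edgeFinsetWithin hU he hve hw hvw)).resolve_left hvw.ne']
  refine ⟨hmatch, fun e he f hf hef x y hxe hyf hxy => hef ?_⟩
  have hy : y ∈ U := (Finset.mem_filter.1 hf).2.2 y hyf
  exact hmatch.eq_of_mem he hf (mem_of_mem_edgeFinsetWithin hU he hxe hy hxy) hyf

lemma coveredVerts_edgeFinsetWithin (hU : ∀ v ∈ U, ∃! w, w ∈ U ∧ G.Adj v w) :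
    coveredVerts (G.edgeFinsetWithin U) = U := by
  ext v
  refine ⟨fun ⟨e, he, hve⟩ => (Finset.mem_filter.1 he).2.2 v hve, fun hv => ?_⟩
  obtain ⟨w, ⟨hw, hvw⟩, -⟩ := hU v hv
  exact mem_coveredVerts_of_mk_mem (mk_mem_edgeFinsetWithin.2 ⟨hvw, hv, hw⟩)

lemma exists_noShortAugmentingPath_of_existsUnique_adj
    (hU : ∀ v ∈ U, ∃! w, w ∈ U ∧ G.Adj v w) (hexp : ∀ u ∉ U, ∀ w ∉ U, ¬ G.Adj u w)
    (haug : ∀ a ∈ U, ∀ b ∈ U, G.Adj a b → ∀ u ∉ U, ∀ w ∉ U, G.Adj u a → G.Adj w b → u = w) :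
    ∃ M, G.IsInducedMatchingSet M ∧ G.NoShortAugmentingPath M := by
  refine ⟨G.edgeFinsetWithin U, isInducedMatchingSet_edgeFinsetWithin hU, ?_⟩
  constructor <;> rw [coveredVerts_edgeFinsetWithin hU]
  · exact fun u w hu hw => hexp u hu w hw
  · intro a b u w hab
    obtain ⟨hab, ha, hb⟩ := mk_mem_edgeFinsetWithin.1 hab
    exact fun hu hw => haug a ha b hb hab u hu w hw

lemma IsStarGraph.exists_noShortAugmentingPath (hG : G.IsStarGraph) :
    ∃ M, G.IsInducedMatchingSet M ∧ G.NoShortAugmentingPath M := by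
  obtain ⟨c, ⟨v, hvc⟩, hadj⟩ := hG
  refine exists_noShortAugmentingPath_of_existsUnique_adj (U := {c, v}) ?_ ?_ ?_
  · rintro x (rfl | rfl)
    · exact ⟨v, by simp [hadj, hvc]⟩
    · exact ⟨c, by simp [hadj, hvc]⟩
  · intro u hu w hw
    simp only [Set.mem_insert_iff, Set.mem_singleton_iff] at hu hw
    rw [hadj]
    tauto
  · intro a _ b _ hab u hu w hw hua hwb
    simp only [Set.mem_insert_iff, Set.mem_singleton_iff] at hu hw
    simp only [hadj] at hab hua hwb
    grind

lemma IsStarTriangleGraph.exists_noShortAugmentingPath (hG : G.IsStarTriangleGraph) :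
    ∃ M, G.IsInducedMatchingSet M ∧ G.NoShortAugmentingPath M := by
  obtain ⟨c, p, -, hp, hadj⟩ := hG
  refine exists_noShortAugmentingPath_of_existsUnique_adj (U := {v | v ≠ c}) ?_ ?_ ?_
  · intro v (hv : v ≠ c)
    refine ⟨p v, ⟨(hp v hv).2.1, (hadj v _).2 (Or.inr (Or.inr ⟨hv, (hp v hv).2.1, rfl⟩))⟩, ?_⟩
    rintro w ⟨hw, hvw⟩
    rcases (hadj v w).1 hvw with ⟨h, -⟩ | ⟨h, -⟩ | ⟨-, -, h⟩
    exacts [absurd h hv, absurd h hw, h]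
  · intro u hu w hw
    rw [not_not.1 hu, not_not.1 hw]
    exact G.irrefl
  · exact fun _ _ _ _ _ u hu w hw _ _ => (not_not.1 hu).trans (not_not.1 hw).symm

lemma IsCWBipartiteWithPendantTriangles.exists_noShortAugmentingPath
    (hG : G.IsCWBipartiteWithPendantTriangles) :
    ∃ M, G.IsInducedMatchingSet M ∧ G.NoShortAugmentingPath M := by
  obtain ⟨X, Y, Z, pair, att, hXY, hXZ, hYZ, hcover, -, hXind, hYind, hz, hleaf, -⟩ := hG
  choose! ℓ _ hℓ using hleaf
  have hℓadj : ∀ x ∈ X, ∀ u, G.Adj (ℓ x) u ↔ u = x := fun x hx u => Set.ext_iff.1 (hℓ x hx) u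
  have hZadj : ∀ z ∈ Z, ∀ u, G.Adj z u ↔ u = pair z ∨ u = att z := fun z hz' => (hz z hz').2.2.2.2.2
  set U := X ∪ Z ∪ ℓ '' X
  have hY : ∀ v ∉ U, v ∈ Y := fun v hv => by
    have : v ∈ X ∪ Y ∪ Z := hcover ▸ Set.mem_univ v
    grind
  have hatt : ∀ z ∈ Z, att z ∉ U := by
    rintro z hzZ ((h | h) | ⟨x, hx, h⟩)
    · exact hXY.ne_of_mem h (hz z hzZ).2.2.2.1 rfl
    · exact hYZ.ne_of_mem (hz z hzZ).2.2.2.1 h rfl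
    · have := (hℓadj x hx z).1 (h ▸ ((hZadj z hzZ _).2 (Or.inr rfl)).symm)
      exact hXZ.ne_of_mem hx hzZ this.symm
  have hZU : ∀ z ∈ Z, ∀ b ∈ U, G.Adj z b → b = pair z := fun z hzZ b hb hzb =>
    ((hZadj z hzZ b).1 hzb).resolve_right fun h => hatt z hzZ (h ▸ hb)
  have hXU : ∀ x ∈ X, ∀ b ∈ U, G.Adj x b → b ∈ ℓ '' X := by
    rintro x hx b ((hb | hb) | hb) hxb
    · exact absurd hxb (hXind x hx b hb)
    · rcases (hZadj b hb x).1 hxb.symm with rfl | rfl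
      exacts [absurd (hz b hb).1 (hXZ.notMem_of_mem_left hx),
        absurd (hz b hb).2.2.2.1 (hXY.notMem_of_mem_left hx)]
    · exact hb
  refine exists_noShortAugmentingPath_of_existsUnique_adj (U := U) ?_ ?_ ?_
  · rintro v ((hv | hv) | ⟨x, hx, rfl⟩)
    · refine ⟨ℓ v, ⟨Or.inr ⟨v, hv, rfl⟩, G.adj_symm ((hℓadj v hv v).2 rfl)⟩, ?_⟩
      rintro w ⟨hw, hvw⟩
      obtain ⟨x, hx, rfl⟩ := hXU v hv w hw hvw
      rw [(hℓadj x hx v).1 hvw.symm]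
    · exact ⟨pair v, ⟨Or.inl (Or.inr (hz v hv).1), (hZadj v hv _).2 (Or.inl rfl)⟩,
        fun w ⟨hw, hvw⟩ => hZU v hv w hw hvw⟩
    · exact ⟨x, ⟨Or.inl (Or.inl hx), (hℓadj x hx x).2 rfl⟩, fun w ⟨_, h⟩ => (hℓadj x hx w).1 h⟩
  · exact fun u hu w hw => hYind u (hY u hu) w (hY w hw)
  · rintro a ((ha | ha) | ⟨x, hx, rfl⟩) b hb hab u hu w hw hua hwb
    · obtain ⟨x, hx, rfl⟩ := hXU a ha b hb hab
      exact absurd (Or.inl (Or.inl ((hℓadj x hx w).1 hwb.symm ▸ hx))) hw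
    · obtain rfl := hZU a ha b hb hab
      have hu' := ((hZadj a ha u).1 hua.symm).resolve_left fun h => hu (h ▸ hb)
      have hw' := ((hZadj _ (hz a ha).1 w).1 hwb.symm).resolve_left
        fun h => hw (h ▸ (hz a ha).2.2.1.symm ▸ Or.inl (Or.inr ha))
      rw [hu', hw', (hz a ha).2.2.2.2.1]
    · exact absurd (Or.inl (Or.inl ((hℓadj x hx u).1 hua.symm ▸ hx))) hu

end Realization

end SimpleGraph

/-- **Cameron–Walker classification.**  A finite connected simple graph with at least one
edge satisfies `ν(G) = ν₀(G)` if and only if it is a star, a star triangle, or a connected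
bipartite graph with bipartition `(X, Y)` in which every vertex of `X` is incident to a
leaf edge, with possibly some pendant triangles attached to vertices of `Y`. -/
theorem cameron_walker_classification {V : Type*} [Fintype V] (G : SimpleGraph V)
    (hconn : G.Connected) (hne : G.edgeSet.Nonempty) :
    G.matchingNumber = G.inducedMatchingNumber ↔
      (G.IsStarGraph ∨ G.IsStarTriangleGraph ∨ G.IsCWBipartiteWithPendantTriangles) := by
  rw [SimpleGraph.matchingNumber_eq_inducedMatchingNumber_iff]
  constructor
  · rintro ⟨M, hM, hA⟩
    exact SimpleGraph.isStarGraph_or_isStarTriangleGraph_or_isCWBipartiteWithPendantTriangles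
      hconn hne hM hA
  · rintro (h | h | h)
    exacts [h.exists_noShortAugmentingPath, h.exists_noShortAugmentingPath,
      h.exists_noShortAugmentingPath]
end

section
/- Let G be a finite simple graph containing no cycle of length 5, let v be a vertex of minimum degree in G, and let x be a neighbor of v. Let {e₁, …, e_m} (m ≥ 1) be an induced matching of the graph G_x = G \ N_G[x] (obtained from G by deleting the closed neighborhood of x) such that {xv, e₁, …, e_m} is a maximal matching of G. Suppose e₁ = yz with v adjacent to y but not adjacent to z. Then G has a matching of size m + 2; in particular ν(G) ≥ m + 2. -/
open scoped Classical

namespace SimpleGraph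

variable {V : Type*}

/-- A maximal matching: a matching maximal with respect to inclusion. -/
def IsMaximalMatchingSet (G : SimpleGraph V) (M : Finset (Sym2 V)) : Prop :=
  G.IsMatchingSet M ∧ ∀ N : Finset (Sym2 V), G.IsMatchingSet N → M ⊆ N → N = M

/-- The graph `G_x` obtained from `G` by deleting the closed neighborhood `N_G[x]` of `x`
(its edges are the edges of `G` with both endpoints outside `N_G[x]`). -/
def deleteClosedNbhd (G : SimpleGraph V) (x : V) : SimpleGraph V where
  Adj u w := G.Adj u w ∧ u ≠ x ∧ ¬ G.Adj x u ∧ w ≠ x ∧ ¬ G.Adj x w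
  symm := by
    constructor
    intro u w h
    exact ⟨h.1.symm, h.2.2.2.1, h.2.2.2.2, h.2.1, h.2.2.1⟩
  loopless := by
    constructor
    intro u h
    exact G.loopless.irrefl u h.1

end SimpleGraph


/-!
The matching is `(M \ {yz}) ∪ {xx', vy, zz'}`. Minimum degree gives `deg v ≥ 2` (`v` sees `x`
and `y`), so `z` has a neighbour `z' ≠ y` and `x` a neighbour `x' ≠ v`. If `x` were adjacent to
`z'`, then `v x z' z y` would be a 5-cycle; hence `z'` lies outside `N_G[x]`, and since `M` is
induced in `G_x`, `z'` is not covered by `M`. Then `x'`, being a neighbour of `x`, is distinct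
from `v`, `z'` and every vertex of `M`: adding `xx'` and augmenting along the path `v y z z'`
each gain one edge.
-/

namespace SimpleGraph

variable {V : Type*} {G : SimpleGraph V}

theorem exists_cycle_five_of_adj {a b c d e : V} (hab : G.Adj a b) (hbc : G.Adj b c)
    (hcd : G.Adj c d) (hde : G.Adj d e) (hea : G.Adj e a)
    (hac : a ≠ c) (had : a ≠ d) (hbd : b ≠ d) (hbe : b ≠ e) (hce : c ≠ e) :
    ∃ f : ZMod 5 → V, Function.Injective f ∧ ∀ i : ZMod 5, G.Adj (f i) (f (i + 1)) := by
  have hinj : Function.Injective (![a, b, c, d, e] : Fin 5 → V) := by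
    have := hab.ne; have := hbc.ne; have := hcd.ne; have := hde.ne; have := hea.ne
    intro i j hij
    fin_cases i <;> fin_cases j <;> simp_all [eq_comm]
  refine ⟨![a, b, c, d, e], hinj, fun i => ?_⟩
  fin_cases i <;> simpa

theorem exists_adj_ne_of_one_lt_ncard {u : V} (h : 1 < (G.neighborSet u).ncard) (w : V) :
    ∃ u', G.Adj u u' ∧ u' ≠ w := by
  by_contra! hw
  have hsub : G.neighborSet u ⊆ {w} := hw
  exact h.not_ge ((Set.ncard_le_ncard hsub).trans (Set.ncard_singleton w).le)

theorem deleteClosedNbhd_le (x : V) : G.deleteClosedNbhd x ≤ G := fun _ _ h => h.1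

theorem ne_and_not_adj_of_mem_edgeSet_deleteClosedNbhd {x a : V} {e : Sym2 V}
    (he : e ∈ (G.deleteClosedNbhd x).edgeSet) (ha : a ∈ e) : a ≠ x ∧ ¬ G.Adj x a := by
  obtain ⟨b, rfl⟩ := Sym2.mem_iff_exists.mp ha
  exact ⟨he.2.1, he.2.2.1⟩

theorem forall_notMem_insert_mk {M : Finset (Sym2 V)} {a b u : V} :
    (∀ e ∈ insert s(a, b) M, u ∉ e) ↔ u ≠ a ∧ u ≠ b ∧ ∀ e ∈ M, u ∉ e := by
  simp [Sym2.mem_iff, not_or, and_assoc]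

namespace IsMatchingSet

variable {M : Finset (Sym2 V)}

theorem mono_s5 {H : SimpleGraph V} (hGH : G ≤ H) (hM : G.IsMatchingSet M) : H.IsMatchingSet M :=
  ⟨fun e he => edgeSet_mono hGH (hM.1 e he), hM.2⟩

theorem subset (hM : G.IsMatchingSet M) {N : Finset (Sym2 V)} (hNM : N ⊆ M) :
    G.IsMatchingSet N :=
  ⟨fun e he => hM.1 e (hNM he), fun e he f hf => hM.2 e (hNM he) f (hNM hf)⟩

theorem insert (hM : G.IsMatchingSet M) {a b : V} (hab : G.Adj a b)
    (ha : ∀ e ∈ M, a ∉ e) (hb : ∀ e ∈ M, b ∉ e) : G.IsMatchingSet (insert s(a, b) M) := by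
  have hdisj : ∀ e ∈ M, ∀ u ∈ s(a, b), u ∉ e := by
    intro e he u hu
    rcases Sym2.mem_iff.mp hu with rfl | rfl
    exacts [ha e he, hb e he]
  refine ⟨(Finset.forall_mem_insert _ _ _).mpr ⟨hab, hM.1⟩, ?_⟩
  intro e he f hf hef u hue huf
  rcases Finset.mem_insert.mp he with rfl | he <;> rcases Finset.mem_insert.mp hf with rfl | hf
  · exact hef rfl
  · exact hdisj f hf u hue huf
  · exact hdisj e he u huf hue
  · exact hM.2 e he f hf hef u hue huf

theorem card_le_matchingNumber [Fintype V] (hM : G.IsMatchingSet M) :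
    M.card ≤ G.matchingNumber :=
  le_csSup ⟨Fintype.card (Sym2 V), by rintro _ ⟨N, -, rfl⟩; exact N.card_le_univ⟩ ⟨M, hM, rfl⟩

theorem exists_card_eq_add_one_of_augmenting_path (hM : G.IsMatchingSet M) {v y z w : V}
    (hyz : s(y, z) ∈ M) (hvy : G.Adj v y) (hzw : G.Adj z w) (hvw : v ≠ w)
    (hv : ∀ e ∈ M, v ∉ e) (hw : ∀ e ∈ M, w ∉ e) :
    ∃ N : Finset (Sym2 V), G.IsMatchingSet N ∧ N.card = M.card + 1 := by
  set M₀ := M.erase s(y, z)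
  have hM₀ : G.IsMatchingSet M₀ := hM.subset (M.erase_subset _)
  have hyz₀ : ∀ u ∈ s(y, z), ∀ e ∈ M₀, u ∉ e := fun u hu e he =>
    hM.2 _ hyz e (Finset.mem_of_mem_erase he) (Finset.ne_of_mem_erase he).symm u hu
  have hv₀ : ∀ e ∈ M₀, v ∉ e := fun e he => hv e (Finset.mem_of_mem_erase he)
  have hw₀ : ∀ e ∈ M₀, w ∉ e := fun e he => hw e (Finset.mem_of_mem_erase he)
  have hvz : v ≠ z := fun h => hv _ hyz (h ▸ Sym2.mem_mk_right y z)
  have hyw : y ≠ w := fun h => hw _ hyz (h ▸ Sym2.mem_mk_left y z)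
  have hyz' : y ≠ z := (G.mem_edgeSet.mp (hM.1 _ hyz)).ne
  set M₁ := Insert.insert s(z, w) M₀
  have hM₁ : G.IsMatchingSet M₁ := hM₀.insert hzw (hyz₀ z (Sym2.mem_mk_right y z)) hw₀
  have hv₁ : ∀ e ∈ M₁, v ∉ e := forall_notMem_insert_mk.mpr ⟨hvz, hvw, hv₀⟩
  have hy₁ : ∀ e ∈ M₁, y ∉ e :=
    forall_notMem_insert_mk.mpr ⟨hyz', hyw, hyz₀ y (Sym2.mem_mk_left y z)⟩
  refine ⟨Insert.insert s(v, y) M₁, hM₁.insert hvy hv₁ hy₁, ?_⟩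
  rw [Finset.card_insert_of_notMem fun h => hv₁ _ h (Sym2.mem_mk_left v y),
    Finset.card_insert_of_notMem fun h => hyz₀ z (Sym2.mem_mk_right y z) _ h
      (Sym2.mem_mk_left z w),
    Finset.card_erase_add_one hyz]

end IsMatchingSet

theorem IsInducedMatchingSet.notMem_of_adj {M : Finset (Sym2 V)}
    (hM : G.IsInducedMatchingSet M) {e : Sym2 V} (he : e ∈ M) {a b : V} (ha : a ∈ e)
    (hab : G.Adj a b) (hb : b ∉ e) : ∀ f ∈ M, b ∉ f := by
  intro f hf hbf
  by_cases hef : e = f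
  · exact hb (hef ▸ hbf)
  · exact hM.2 e he f hf hef a b ha hbf hab

end SimpleGraph

open SimpleGraph in
theorem matching_of_size_m_add_two_general {V : Type*} [Fintype V] (G : SimpleGraph V)
    (hC5free : ¬ ∃ c : ZMod 5 → V, Function.Injective c ∧
      ∀ i : ZMod 5, G.Adj (c i) (c (i + 1)))
    (v x y z : V)
    (hmin : ∀ u : V, (G.neighborSet v).ncard ≤ (G.neighborSet u).ncard)
    (hxv : G.Adj v x)
    (M : Finset (Sym2 V))
    (hM : (G.deleteClosedNbhd x).IsInducedMatchingSet M)
    (he₁ : s(y, z) ∈ M)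
    (hvy : G.Adj v y) (hvz : ¬ G.Adj v z) :
    (∃ N : Finset (Sym2 V), G.IsMatchingSet N ∧ N.card = M.card + 2) ∧
      M.card + 2 ≤ G.matchingNumber := by
  have hfar : ∀ e ∈ M, ∀ a ∈ e, a ≠ x ∧ ¬ G.Adj x a := fun e he _ =>
    ne_and_not_adj_of_mem_edgeSet_deleteClosedNbhd (hM.1.1 e he)
  have hy := hfar _ he₁ y (Sym2.mem_mk_left y z)
  have hz := hfar _ he₁ z (Sym2.mem_mk_right y z)
  have hMG : G.IsMatchingSet M := hM.1.mono_s5 (deleteClosedNbhd_le x)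
  have hyz : G.Adj y z := G.mem_edgeSet.mp (hMG.1 _ he₁)
  have hdeg : ∀ u, 1 < (G.neighborSet u).ncard := fun u =>
    ((Set.one_lt_ncard_iff).mpr ⟨x, y, hxv, hvy, hy.1.symm⟩).trans_le (hmin u)
  obtain ⟨z', hzz', hz'y⟩ := exists_adj_ne_of_one_lt_ncard (hdeg z) y
  obtain ⟨x', hxx', hx'v⟩ := exists_adj_ne_of_one_lt_ncard (hdeg x) v
  have hvz' : v ≠ z' := fun h => hvz (h ▸ hzz').symm
  have hxz' : ¬ G.Adj x z' := fun h => hC5free <| exists_cycle_five_of_adj hxv h hzz'.symm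
    hyz.symm hvy.symm hvz' (fun h => hz.2 (h ▸ hxv.symm)) hz.1.symm hy.1.symm hz'y
  have hz'x : z' ≠ x := fun h => hz.2 (h ▸ hzz').symm
  have hz'free : ∀ e ∈ M, z' ∉ e := hM.notMem_of_adj he₁ (Sym2.mem_mk_right y z)
    ⟨hzz', hz.1, hz.2, hz'x, hxz'⟩ (by simp [hz'y, hzz'.ne.symm])
  set M₁ := insert s(x, x') M
  have hM₁ : G.IsMatchingSet M₁ := hMG.insert hxx'
    (fun e he h => (hfar e he x h).1 rfl) (fun e he h => (hfar e he x' h).2 hxx')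
  have hcard₁ : M₁.card = M.card + 1 :=
    Finset.card_insert_of_notMem fun h => (hfar _ h x (Sym2.mem_mk_left x x')).1 rfl
  obtain ⟨N, hN, hcard⟩ := hM₁.exists_card_eq_add_one_of_augmenting_path
    (Finset.mem_insert_of_mem he₁) hvy hzz' hvz'
    (forall_notMem_insert_mk.mpr ⟨hxv.ne, hx'v.symm, fun e he h => (hfar e he v h).2 hxv.symm⟩)
    (forall_notMem_insert_mk.mpr ⟨hz'x, fun h => hxz' (h ▸ hxx'), hz'free⟩)
  rw [hcard₁] at hcard
  exact ⟨⟨N, hN, hcard⟩, hcard ▸ hN.card_le_matchingNumber⟩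

/-- Let `G` be a `C₅`-free graph, `v` a vertex of minimum degree, `x` a neighbor of `v`,
and `M = {e₁, …, e_m}` an induced matching of `G_x = G \ N_G[x]` such that `{xv} ∪ M` is a
maximal matching of `G`.  If `e₁ = yz` with `v` adjacent to `y` but not to `z`, then `G`
has a matching of size `m + 2`; in particular `ν(G) ≥ m + 2`. -/
theorem matching_of_size_m_add_two {V : Type*} [Fintype V] (G : SimpleGraph V)
    (hC5free : ¬ ∃ c : ZMod 5 → V, Function.Injective c ∧
      ∀ i : ZMod 5, G.Adj (c i) (c (i + 1)))
    (v x y z : V)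
    (hmin : ∀ u : V, (G.neighborSet v).ncard ≤ (G.neighborSet u).ncard)
    (hxv : G.Adj v x)
    (M : Finset (Sym2 V))
    (hM : (G.deleteClosedNbhd x).IsInducedMatchingSet M)
    (hmax : G.IsMaximalMatchingSet (insert s(x, v) M))
    (he₁ : s(y, z) ∈ M)
    (hvy : G.Adj v y) (hvz : ¬ G.Adj v z) :
    (∃ N : Finset (Sym2 V), G.IsMatchingSet N ∧ N.card = M.card + 2) ∧
      M.card + 2 ≤ G.matchingNumber :=
  matching_of_size_m_add_two_general G hC5free v x y z hmin hxv M hM he₁ hvy hvz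
end

section
/- Let G be a finite connected simple graph that contains a cycle C₅ of length 5 and also a cycle C whose edge set is different from that of C₅. Then G has an edge e = uv not belonging to C₅ that lies in the middle of a simple path of length 3 in G; that is, there exist four distinct vertices a, u, v, b of G such that au, uv, and vb are all edges of G. -/
private lemma zmodCast_ne_zero {n : ℕ} [NeZero n] {k : ℕ} (h0 : 0 < k) (h : k < n) :
    ((k : ℕ) : ZMod n) ≠ 0 := by
  intro h'
  have hd := (ZMod.natCast_eq_zero_iff k n).mp h'
  have := Nat.le_of_dvd h0 hd
  omega

private lemma walk_closed {V : Type*} {G : SimpleGraph V} (S : Set V)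
    (hS : ∀ ⦃x y : V⦄, x ∈ S → G.Adj x y → y ∈ S) :
    ∀ {a b : V}, G.Walk a b → a ∈ S → b ∈ S := by
  intro a b p
  induction p with
  | nil => exact id
  | cons h p ih => intro ha; exact ih (hS ha h)

/-- If every edge of the cycle `d` is an edge of the 5-cycle `c`, then the edge sets
coincide. -/
private lemma exists_edge_notin_c5 {V : Type*}
    (c : ZMod 5 → V) (hcinj : Function.Injective c)
    {n : ℕ} (hn : 3 ≤ n)
    (d : ZMod n → V) (hdinj : Function.Injective d)
    (hdiff : {e : Sym2 V | ∃ i : ZMod n, e = s(d i, d (i + 1))} ≠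
             {e : Sym2 V | ∃ i : ZMod 5, e = s(c i, c (i + 1))}) :
    ∃ i : ZMod n, s(d i, d (i + 1)) ∉ {e : Sym2 V | ∃ i : ZMod 5, e = s(c i, c (i + 1))} := by
  haveI : NeZero n := ⟨by omega⟩
  by_contra hcon
  push_neg at hcon
  apply hdiff
  have hchoice : ∀ i : ZMod n, ∃ g : ZMod 5,
      d i = c g ∧ (d (i+1) = c (g+1) ∨ d (i+1) = c (g-1)) := by
    intro i
    obtain ⟨j, hj⟩ := hcon i
    rcases Sym2.eq_iff.mp hj with ⟨h1, h2⟩ | ⟨h1, h2⟩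
    · exact ⟨j, h1, Or.inl h2⟩
    · exact ⟨j + 1, h1, Or.inr (by rw [h2, add_sub_cancel_right])⟩
  choose f hf hf' using hchoice
  have hstep : ∀ i : ZMod n, f (i+1) = f i + 1 ∨ f (i+1) = f i - 1 := by
    intro i
    rcases hf' i with h | h
    · exact Or.inl (hcinj (by rw [← hf (i+1), h]))
    · exact Or.inr (hcinj (by rw [← hf (i+1), h]))
  have finj : Function.Injective f := fun i j h => hdinj (by rw [hf, hf, h])
  have h2n : (2 : ZMod n) ≠ 0 := by
    have := zmodCast_ne_zero (n := n) (k := 2) (by norm_num) (by omega)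
    simpa using this
  have hne2 : ∀ i : ZMod n, i + 1 + 1 ≠ i := by
    intro i h
    exact h2n (by linear_combination h)
  have hmono : ∀ i : ZMod n, f (i+1) = f i + 1 → f (i+1+1) = f (i+1) + 1 := by
    intro i h1
    rcases hstep (i+1) with h | h
    · exact h
    · exact absurd (finj (by rw [h, h1, add_sub_cancel_right])) (hne2 i)
  have hmono' : ∀ i : ZMod n, f (i+1) = f i - 1 → f (i+1+1) = f (i+1) - 1 := by
    intro i h1
    rcases hstep (i+1) with h | h
    · exact absurd (finj (by rw [h, h1, sub_add_cancel])) (hne2 i)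
    · exact h
  have hle : n ≤ 5 := by
    have := Fintype.card_le_of_injective f finj
    simpa [ZMod.card] using this
  rcases hstep 0 with h0 | h0
  · -- all steps are +1
    have hplus : ∀ i : ZMod n, f (i+1) = f i + 1 := by
      have key : ∀ k : ℕ, f ((k : ZMod n) + 1) = f (k : ZMod n) + 1 := by
        intro k
        induction k with
        | zero => simpa using h0
        | succ k ih =>
          have := hmono _ ih
          push_cast
          exact this
      intro i
      have := key i.val
      rwa [ZMod.natCast_rightInverse i] at this
    have key : ∀ k : ℕ, f (k : ZMod n) = f 0 + (k : ZMod 5) := by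
      intro k
      induction k with
      | zero => simp
      | succ k ih =>
        push_cast
        rw [hplus, ih]
        ring
    have h5n : ((n : ℕ) : ZMod 5) = 0 := by
      have hk := key n
      rw [ZMod.natCast_self] at hk
      exact left_eq_add.mp hk
    have hdvd : (5 : ℕ) ∣ n := (ZMod.natCast_eq_zero_iff n 5).mp h5n
    have hn5 : n = 5 := by
      have := Nat.le_of_dvd (by omega) hdvd
      omega
    subst hn5
    have keyz : ∀ i : ZMod 5, f i = f 0 + i := by
      intro i
      have := key i.val
      rwa [ZMod.natCast_rightInverse i] at this
    ext e
    constructor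
    · rintro ⟨i, hi⟩
      rw [hi]
      exact hcon i
    · rintro ⟨j, hj⟩
      refine ⟨j - f 0, ?_⟩
      have h1 : d (j - f 0) = c j := by
        rw [hf, keyz]
        congr 1
        ring
      have h2 : d (j - f 0 + 1) = c (j + 1) := by
        rw [hf, keyz]
        congr 1
        ring
      rw [hj, h1, h2]
  · -- all steps are -1
    have hminus : ∀ i : ZMod n, f (i+1) = f i - 1 := by
      have key : ∀ k : ℕ, f ((k : ZMod n) + 1) = f (k : ZMod n) - 1 := by
        intro k
        induction k with
        | zero => simpa using h0
        | succ k ih =>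
          have := hmono' _ ih
          push_cast
          exact this
      intro i
      have := key i.val
      rwa [ZMod.natCast_rightInverse i] at this
    have key : ∀ k : ℕ, f (k : ZMod n) = f 0 - (k : ZMod 5) := by
      intro k
      induction k with
      | zero => simp
      | succ k ih =>
        push_cast
        rw [hminus, ih]
        ring
    have h5n : ((n : ℕ) : ZMod 5) = 0 := by
      have hk := key n
      rw [ZMod.natCast_self] at hk
      have : f 0 - (f 0 - (n : ZMod 5)) = 0 := by rw [← hk]; ring
      linear_combination this
    have hdvd : (5 : ℕ) ∣ n := (ZMod.natCast_eq_zero_iff n 5).mp h5n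
    have hn5 : n = 5 := by
      have := Nat.le_of_dvd (by omega) hdvd
      omega
    subst hn5
    have keyz : ∀ i : ZMod 5, f i = f 0 - i := by
      intro i
      have := key i.val
      rwa [ZMod.natCast_rightInverse i] at this
    ext e
    constructor
    · rintro ⟨i, hi⟩
      rw [hi]
      exact hcon i
    · rintro ⟨j, hj⟩
      refine ⟨f 0 - (j + 1), ?_⟩
      have h1 : d (f 0 - (j + 1)) = c (j + 1) := by
        rw [hf, keyz]
        congr 1
        ring
      have h2 : d (f 0 - (j + 1) + 1) = c j := by
        rw [hf, hminus, keyz]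
        congr 1
        ring
      rw [hj, h1, h2]
      exact Sym2.eq_swap.symm

/-- Let `G` be a finite connected simple graph containing a 5-cycle `c` (an injective
`c : ZMod 5 → V` with consecutive vertices adjacent) and another cycle `d` of some length
`n ≥ 3` whose edge set differs from that of `c`.  Then `G` has an edge `uv` not belonging
to the 5-cycle that lies in the middle of a simple path of length 3: there are four
distinct vertices `a, u, v, b` with `au`, `uv`, `vb` edges of `G`. -/
theorem exists_middle_edge_of_two_cycles {V : Type*} [Fintype V] (G : SimpleGraph V)
    (hconn : G.Connected)
    (c : ZMod 5 → V) (hcinj : Function.Injective c)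
    (hcadj : ∀ i : ZMod 5, G.Adj (c i) (c (i + 1)))
    (n : ℕ) (hn : 3 ≤ n)
    (d : ZMod n → V) (hdinj : Function.Injective d)
    (hdadj : ∀ i : ZMod n, G.Adj (d i) (d (i + 1)))
    (hdiff : {e : Sym2 V | ∃ i : ZMod n, e = s(d i, d (i + 1))} ≠
             {e : Sym2 V | ∃ i : ZMod 5, e = s(c i, c (i + 1))}) :
    ∃ a u v b : V, a ≠ u ∧ a ≠ v ∧ a ≠ b ∧ u ≠ v ∧ u ≠ b ∧ v ≠ b ∧
      G.Adj a u ∧ G.Adj u v ∧ G.Adj v b ∧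
      s(u, v) ∉ {e : Sym2 V | ∃ i : ZMod 5, e = s(c i, c (i + 1))} := by
  haveI : NeZero n := ⟨by omega⟩
  obtain ⟨i0, he⟩ := exists_edge_notin_c5 c hcinj hn d hdinj hdiff
  have h1n : (1 : ZMod n) ≠ 0 := by
    have := zmodCast_ne_zero (n := n) (k := 1) (by norm_num) (by omega)
    simpa using this
  have h2n : (2 : ZMod n) ≠ 0 := by
    have := zmodCast_ne_zero (n := n) (k := 2) (by norm_num) (by omega)
    simpa using this
  have h15 : (1 : ZMod 5) ≠ 0 := by decide
  have h25 : (2 : ZMod 5) ≠ 0 := by decide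
  have idx2 : ∀ (a b : ZMod n), b - a ≠ 0 → d a ≠ d b :=
    fun a b hab h => hab (by rw [hdinj h]; ring)
  have cne : ∀ (a b : ZMod 5), b - a ≠ 0 → c a ≠ c b :=
    fun a b hab h => hab (by rw [hcinj h]; ring)
  have cne1 : ∀ a : ZMod 5, c a ≠ c (a+1) :=
    fun a => cne a (a+1) (fun h => h15 (by linear_combination h))
  have cnem1 : ∀ a : ZMod 5, c (a-1) ≠ c a :=
    fun a => cne (a-1) a (fun h => h15 (by linear_combination h))
  have cne2 : ∀ a : ZMod 5, c (a-1) ≠ c (a+1) :=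
    fun a => cne (a-1) (a+1) (fun h => h25 (by linear_combination h))
  have hnotC : ∀ x y : V, (∀ j : ZMod 5, x ≠ c j) →
      s(x, y) ∉ {e : Sym2 V | ∃ i : ZMod 5, e = s(c i, c (i + 1))} := by
    rintro x y hx ⟨j, hj⟩
    rcases Sym2.eq_iff.mp hj with ⟨h1, _⟩ | ⟨h1, _⟩
    · exact hx j h1
    · exact hx (j+1) h1
  -- basic vertices and adjacencies
  have huv : G.Adj (d i0) (d (i0+1)) := hdadj i0
  have hwu : G.Adj (d (i0-1)) (d i0) := by
    have := hdadj (i0-1)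
    rwa [show i0 - 1 + 1 = i0 from by ring] at this
  have hvb : G.Adj (d (i0+1)) (d (i0+2)) := by
    have := hdadj (i0+1)
    rwa [show i0 + 1 + 1 = i0 + 2 from by ring] at this
  have hbu : d (i0+2) ≠ d i0 := idx2 (i0+2) i0 (fun h => h2n (by linear_combination -h))
  have hau : d (i0-1) ≠ d i0 := idx2 (i0-1) i0 (fun h => h1n (by linear_combination h))
  have hav : d (i0-1) ≠ d (i0+1) := idx2 (i0-1) (i0+1) (fun h => h2n (by linear_combination h))
  by_cases hAu : ∃ j, d i0 = c j
  · -- Case A : u is on the 5-cycle; take a among the two cycle-neighbours of u, b on d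
    obtain ⟨j, hj⟩ := hAu
    have hv1 : d (i0+1) ≠ c (j+1) := by
      intro h
      exact he ⟨j, by rw [hj, h]⟩
    have hv2 : d (i0+1) ≠ c (j-1) := by
      intro h
      refine he ⟨j - 1, ?_⟩
      rw [hj, h, show j - 1 + 1 = j from by ring]
      exact Sym2.eq_swap
    by_cases hab : c (j+1) = d (i0+2)
    · refine ⟨c (j-1), d i0, d (i0+1), d (i0+2), ?_, hv2.symm, ?_, huv.ne, hbu.symm,
        hvb.ne, ?_, huv, hvb, he⟩
      · rw [hj]; exact cnem1 j
      · rw [← hab]; exact cne2 j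
      · have := hcadj (j-1)
        rwa [show j - 1 + 1 = j from by ring, ← hj] at this
    · refine ⟨c (j+1), d i0, d (i0+1), d (i0+2), ?_, hv1.symm, hab, huv.ne, hbu.symm,
        hvb.ne, ?_, huv, hvb, he⟩
      · rw [hj]; exact (cne1 j).symm
      · have := (hcadj j).symm
        rwa [← hj] at this
  · push_neg at hAu
    by_cases hAv : ∃ j, d (i0+1) = c j
    · -- Case B : v is on the 5-cycle; take a on d, b among cycle-neighbours of v
      obtain ⟨j, hj⟩ := hAv
      have hb1 : c (j+1) ≠ d i0 := fun h => hAu (j+1) h.symm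
      have hb2 : c (j-1) ≠ d i0 := fun h => hAu (j-1) h.symm
      by_cases hab : c (j+1) = d (i0-1)
      · refine ⟨d (i0-1), d i0, d (i0+1), c (j-1), hau, hav, ?_, huv.ne, hb2.symm,
          ?_, hwu, huv, ?_, he⟩
        · rw [← hab]; exact (cne2 j).symm
        · rw [hj]; exact (cnem1 j).symm
        · have := (hcadj (j-1)).symm
          rwa [show j - 1 + 1 = j from by ring, ← hj] at this
      · refine ⟨d (i0-1), d i0, d (i0+1), c (j+1), hau, hav, fun h => hab h.symm,
          huv.ne, hb1.symm, ?_, hwu, huv, ?_, he⟩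
        · rw [hj]; exact cne1 j
        · rw [hj]; exact hcadj j
    · -- Case C : neither u nor v is on the 5-cycle
      push_neg at hAv
      by_cases hw0 : d (i0-1) = d (i0+2)
      · -- triangle-like situation: the two d-neighbours coincide, call it w
        have hwv : d (i0-1) ≠ d (i0+1) := hav
        have hvw : G.Adj (d (i0+1)) (d (i0-1)) := by rw [hw0]; exact hvb
        by_cases hx1 : ∃ x, G.Adj (d i0) x ∧ x ≠ d (i0+1) ∧ x ≠ d (i0-1)
        · obtain ⟨x, hxadj, hxv, hxw⟩ := hx1
          exact ⟨x, d i0, d (i0+1), d (i0-1), hxadj.ne', hxv, hxw, huv.ne, hau.symm,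
            hwv.symm, hxadj.symm, huv, hvw, he⟩
        by_cases hx2 : ∃ x, G.Adj (d (i0+1)) x ∧ x ≠ d i0 ∧ x ≠ d (i0-1)
        · obtain ⟨x, hxadj, hxu, hxw⟩ := hx2
          exact ⟨d (i0-1), d i0, d (i0+1), x, hau, hav, fun h => hxw h.symm, huv.ne,
            fun h => hxu h.symm, hxadj.ne, hwu, huv, hxadj, he⟩
        by_cases hx3 : ∃ x, G.Adj (d (i0-1)) x ∧ x ≠ d i0 ∧ x ≠ d (i0+1)
        · obtain ⟨x, hxadj, hxu, hxv⟩ := hx3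
          exact ⟨d (i0+1), d i0, d (i0-1), x, huv.ne', hwv.symm, fun h => hxv h.symm,
            hau.symm, fun h => hxu h.symm, hxadj.ne, huv.symm, hwu.symm, hxadj,
            hnotC _ _ hAu⟩
        · -- impossible: {u, v, w} would be a connected component missing the 5-cycle
          exfalso
          push_neg at hx1 hx2 hx3
          set S : Set V := {x | x = d i0 ∨ x = d (i0+1) ∨ x = d (i0-1)} with hS
          have hclosed : ∀ ⦃x y : V⦄, x ∈ S → G.Adj x y → y ∈ S := by
            rintro x y (rfl | rfl | rfl) hadj
            · by_cases h : y = d (i0+1)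
              · exact Or.inr (Or.inl h)
              · exact Or.inr (Or.inr (hx1 y hadj h))
            · by_cases h : y = d i0
              · exact Or.inl h
              · exact Or.inr (Or.inr (hx2 y hadj h))
            · by_cases h : y = d i0
              · exact Or.inl h
              · exact Or.inr (Or.inl (hx3 y hadj h))
          obtain ⟨p⟩ := hconn (d i0) (c 0)
          have hc0 : c 0 ∈ S := walk_closed S hclosed p (Or.inl rfl)
          rcases hc0 with h | h | h
          · exact hAu 0 h.symm
          · exact hAv 0 h.symm
          · have := hx3 (c (0+1)) (by rw [← h]; exact hcadj 0) (fun h' => hAu (0+1) h'.symm)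
            exact hAv (0+1) this.symm
      · -- the two d-neighbours are distinct: immediate path
        exact ⟨d (i0-1), d i0, d (i0+1), d (i0+2), hau, hav, hw0, huv.ne, hbu.symm,
          hvb.ne, hwu, huv, hvb, he⟩
end

section
/- Let G be a finite connected simple graph consisting of a connected bipartite graph with bipartition (X, Y) such that every vertex x ∈ X is incident to at least one leaf edge of G, together with p ≥ 0 pendant triangles attached to vertices of Y (the pendant triangles being pairwise vertex-disjoint outside Y). Then ν(G) = ν₀(G) = |X| + p. -/
open scoped Classical

/-- Let `G` be a finite connected simple graph consisting of a bipartite graph with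
bipartition `(X, Y)` (no edges inside `X` nor inside `Y`), such that every vertex `x ∈ X`
is incident to at least one leaf edge of `G` (i.e. adjacent to some `y ∈ Y` with
`N_G(y) = {x}`), together with `t ≥ 0` pendant triangles attached to vertices of `Y`:
the triangle vertices form the set `Z` with `|Z| = 2t`, paired by the fixed-point-free
involution `pair`, the pair `{z, pair z}` being attached to the vertex `att z ∈ Y`, and
each `z ∈ Z` is adjacent exactly to `pair z` and `att z` (so the pendant triangles are
pairwise vertex-disjoint outside `Y`).  Then `ν(G) = ν₀(G) = |X| + t`. -/
theorem matchingNumber_of_CW_bipartite_with_pendant_triangles {V : Type*} [Fintype V]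
    (G : SimpleGraph V) (hconn : G.Connected)
    (X Y Z : Finset V) (t : ℕ)
    (hdXY : Disjoint X Y) (hdXZ : Disjoint X Z) (hdYZ : Disjoint Y Z)
    (hunion : X ∪ Y ∪ Z = Finset.univ)
    (hXX : ∀ u ∈ X, ∀ v ∈ X, ¬ G.Adj u v)
    (hYY : ∀ u ∈ Y, ∀ v ∈ Y, ¬ G.Adj u v)
    (pair att : V → V)
    (hZ : ∀ z ∈ Z, pair z ∈ Z ∧ pair z ≠ z ∧ pair (pair z) = z ∧ att z ∈ Y ∧
      att (pair z) = att z ∧ ∀ u : V, G.Adj z u ↔ (u = pair z ∨ u = att z))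
    (hleaf : ∀ x ∈ X, ∃ y ∈ Y, G.neighborSet y = {x})
    (hZcard : Z.card = 2 * t) :
    G.matchingNumber = X.card + t ∧ G.inducedMatchingNumber = X.card + t := by
  classical
  -- leaf choice function
  have hleaf' : ∀ x : V, ∃ y : V, x ∈ X → y ∈ Y ∧ G.neighborSet y = {x} := by
    intro x
    by_cases hx : x ∈ X
    · obtain ⟨y, hy, hn⟩ := hleaf x hx
      exact ⟨y, fun _ => ⟨hy, hn⟩⟩
    · exact ⟨x, fun h => absurd h hx⟩
  choose f hf using hleaf'
  have hfY : ∀ x ∈ X, f x ∈ Y := fun x hx => (hf x hx).1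
  have hfAdj : ∀ x ∈ X, G.Adj (f x) x := by
    intro x hx
    have : x ∈ G.neighborSet (f x) := by rw [(hf x hx).2]; exact Set.mem_singleton x
    exact this
  have hfOnly : ∀ x ∈ X, ∀ u : V, G.Adj (f x) u → u = x := by
    intro x hx u hu
    have : u ∈ G.neighborSet (f x) := hu
    rw [(hf x hx).2] at this
    exact this
  -- no X–Z adjacency
  have hXZ' : ∀ x ∈ X, ∀ z ∈ Z, ¬ G.Adj x z := by
    intro x hx z hz hadj
    rcases ((hZ z hz).2.2.2.2.2 x).mp hadj.symm with rfl | rfl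
    · exact Finset.disjoint_left.mp hdXZ hx (hZ z hz).1
    · exact Finset.disjoint_left.mp hdXY hx (hZ z hz).2.2.2.1
  -- leaf not adjacent to Z
  have hfZ : ∀ x ∈ X, ∀ z ∈ Z, ¬ G.Adj (f x) z := by
    intro x hx z hz hadj
    have hzx := hfOnly x hx z hadj
    exact Finset.disjoint_left.mp hdXZ (hzx ▸ hx) hz
  -- structure of edges containing a vertex of Z
  have hcont : ∀ e ∈ G.edgeSet, ∀ z ∈ Z, z ∈ e → e = s(z, pair z) ∨ e = s(z, att z) := by
    intro e he z hz hmem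
    induction e using Sym2.ind with
    | _ a b =>
      rw [SimpleGraph.mem_edgeSet] at he
      rcases Sym2.mem_iff.mp hmem with rfl | rfl
      · rcases ((hZ z hz).2.2.2.2.2 b).mp he with rfl | rfl
        · exact Or.inl rfl
        · exact Or.inr rfl
      · rcases ((hZ z hz).2.2.2.2.2 a).mp he.symm with rfl | rfl
        · exact Or.inl Sym2.eq_swap
        · exact Or.inr Sym2.eq_swap
  -- triangle edges
  have htriCard : (Z.image (fun z => s(z, pair z))).card = t := by
    have hsum := Finset.card_eq_sum_card_image (fun z => s(z, pair z)) Z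
    have hfib : ∀ b ∈ Z.image (fun z => s(z, pair z)),
        (Z.filter fun a => s(a, pair a) = b).card = 2 := by
      intro b hb
      obtain ⟨z, hz, rfl⟩ := Finset.mem_image.mp hb
      have hfilter : (Z.filter fun a => s(a, pair a) = s(z, pair z)) = {z, pair z} := by
        ext w
        simp only [Finset.mem_filter, Finset.mem_insert, Finset.mem_singleton]
        constructor
        · rintro ⟨hw, heq⟩
          rcases Sym2.eq_iff.mp heq with ⟨h1, _⟩ | ⟨h1, _⟩
          · exact Or.inl h1
          · exact Or.inr h1
        · rintro (rfl | rfl)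
          · exact ⟨hz, rfl⟩
          · refine ⟨(hZ z hz).1, ?_⟩
            show s(pair z, pair (pair z)) = s(z, pair z)
            rw [(hZ z hz).2.2.1]
            exact Sym2.eq_swap
      rw [hfilter, Finset.card_insert_of_notMem (by
          simp only [Finset.mem_singleton]; exact fun h => (hZ z hz).2.1 h.symm),
        Finset.card_singleton]
    rw [Finset.sum_const_nat hfib] at hsum
    omega
  -- the lower-bound matching
  set M0 : Finset (Sym2 V) :=
    X.image (fun x => s(x, f x)) ∪ Z.image (fun z => s(z, pair z)) with hM0_def
  have hM0sub : ∀ e ∈ M0, e ∈ G.edgeSet := by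
    intro e he
    rcases Finset.mem_union.mp he with h | h
    · obtain ⟨x, hx, rfl⟩ := Finset.mem_image.mp h
      exact (hfAdj x hx).symm
    · obtain ⟨z, hz, rfl⟩ := Finset.mem_image.mp h
      exact ((hZ z hz).2.2.2.2.2 (pair z)).mpr (Or.inl rfl)
  have hM0ind : G.IsInducedMatchingSet M0 := by
    have key : ∀ e ∈ M0, ∀ g ∈ M0, e ≠ g → ∀ u v : V, u ∈ e → v ∈ g →
        u ≠ v ∧ ¬ G.Adj u v := by
      intro e he g hg hne u v hu hv
      rcases Finset.mem_union.mp he with h | h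
      · obtain ⟨x, hx, rfl⟩ := Finset.mem_image.mp h
        rcases Finset.mem_union.mp hg with h' | h'
        · obtain ⟨x', hx', rfl⟩ := Finset.mem_image.mp h'
          have hxx : x ≠ x' := by rintro rfl; exact hne rfl
          rcases Sym2.mem_iff.mp hu with rfl | rfl <;> rcases Sym2.mem_iff.mp hv with rfl | rfl
          · exact ⟨hxx, hXX _ hx _ hx'⟩
          · constructor
            · intro hh; exact Finset.disjoint_left.mp hdXY (hh ▸ hx) (hfY x' hx')
            · intro hh; exact hxx (hfOnly x' hx' u hh.symm)
          · constructor
            · intro hh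
              have : v ∈ Y := by rw [← hh]; exact hfY x hx
              exact Finset.disjoint_left.mp hdXY hx' ((hh ▸ (hfY x hx)) )
            · intro hh; exact hxx (hfOnly x hx v hh).symm
          · constructor
            · intro hh
              apply hxx
              have hs : ({x} : Set V) = {x'} := by
                rw [← (hf x hx).2, ← (hf x' hx').2, hh]
              simpa using hs
            · exact hYY _ (hfY x hx) _ (hfY x' hx')
        · obtain ⟨z, hz, rfl⟩ := Finset.mem_image.mp h'
          have hvZ : v ∈ Z := by
            rcases Sym2.mem_iff.mp hv with rfl | rfl
            · exact hz
            · exact (hZ z hz).1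
          rcases Sym2.mem_iff.mp hu with rfl | rfl
          · exact ⟨fun hh => Finset.disjoint_left.mp hdXZ (hh ▸ hx) hvZ, hXZ' u hx v hvZ⟩
          · exact ⟨fun hh => Finset.disjoint_left.mp hdYZ (hh ▸ hfY x hx) hvZ, hfZ x hx v hvZ⟩
      · obtain ⟨z, hz, rfl⟩ := Finset.mem_image.mp h
        have huZ : u ∈ Z := by
          rcases Sym2.mem_iff.mp hu with rfl | rfl
          · exact hz
          · exact (hZ z hz).1
        rcases Finset.mem_union.mp hg with h' | h'
        · obtain ⟨x', hx', rfl⟩ := Finset.mem_image.mp h'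
          rcases Sym2.mem_iff.mp hv with rfl | rfl
          · exact ⟨fun hh => Finset.disjoint_left.mp hdXZ (hh.symm ▸ hx') huZ,
              fun hh => hXZ' v hx' u huZ hh.symm⟩
          · exact ⟨fun hh => Finset.disjoint_left.mp hdYZ (hh.symm ▸ hfY x' hx') huZ,
              fun hh => hfZ x' hx' u huZ hh.symm⟩
        · obtain ⟨z', hz', rfl⟩ := Finset.mem_image.mp h'
          have hvZ : v ∈ Z := by
            rcases Sym2.mem_iff.mp hv with rfl | rfl
            · exact hz'
            · exact (hZ z' hz').1
          have hzz : z' ≠ z ∧ z' ≠ pair z := by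
            constructor
            · rintro rfl; exact hne rfl
            · rintro rfl
              apply hne
              show s(z, pair z) = s(pair z, pair (pair z))
              rw [(hZ z hz).2.2.1]; exact Sym2.eq_swap.symm
          have hdiff : ∀ w, w ∈ (s(z', pair z') : Sym2 V) → w ≠ z ∧ w ≠ pair z := by
            intro w hw
            rcases Sym2.mem_iff.mp hw with rfl | rfl
            · exact hzz
            · constructor
              · intro hh
                exact hzz.2 (by rw [← hh, (hZ z' hz').2.2.1])
              · intro hh
                apply hzz.1
                have h2 := congrArg pair hh
                rwa [(hZ z' hz').2.2.1, (hZ z hz).2.2.1] at h2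
          have huzp : u = z ∨ u = pair z := Sym2.mem_iff.mp hu
          constructor
          · intro hh
            rcases huzp with rfl | rfl
            · exact (hdiff v hv).1 hh.symm
            · exact (hdiff v hv).2 hh.symm
          · intro hh
            have huv := ((hZ u huZ).2.2.2.2.2 v).mp hh
            have hvnotY : v ∉ Y := fun hy => Finset.disjoint_left.mp hdYZ hy hvZ
            rcases huv with rfl | rfl
            · -- v = pair u
              have hpu : pair u ≠ z ∧ pair u ≠ pair z := hdiff (pair u) hv
              rcases huzp with rfl | rfl
              · exact hpu.2 rfl
              · exact hpu.1 (hZ z hz).2.2.1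
            · exact hvnotY ((hZ u huZ).2.2.2.1)
    constructor
    · refine ⟨hM0sub, ?_⟩
      intro e he g hg hne v hv hvg
      exact (key e he g hg hne v v hv hvg).1 rfl
    · intro e he g hg hne u v hu hv
      exact (key e he g hg hne u v hu hv).2
  have hM0card : M0.card = X.card + t := by
    have hdisj : Disjoint (X.image (fun x => s(x, f x))) (Z.image (fun z => s(z, pair z))) := by
      rw [Finset.disjoint_left]
      rintro e he he'
      obtain ⟨x, hx, rfl⟩ := Finset.mem_image.mp he
      obtain ⟨z, hz, heq⟩ := Finset.mem_image.mp he'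
      have hmem : x ∈ (s(z, pair z) : Sym2 V) := heq ▸ Sym2.mem_mk_left x (f x)
      rcases Sym2.mem_iff.mp hmem with rfl | rfl
      · exact Finset.disjoint_left.mp hdXZ hx hz
      · exact Finset.disjoint_left.mp hdXZ hx (hZ z hz).1
    rw [hM0_def, Finset.card_union_of_disjoint hdisj, htriCard]
    congr 1
    apply Finset.card_image_of_injOn
    intro x hx x' hx' heq
    rcases Sym2.eq_iff.mp heq with ⟨h1, _⟩ | ⟨h1, _⟩
    · exact h1
    · exact absurd (hfY x' hx') (fun hy => Finset.disjoint_left.mp hdXY (h1 ▸ hx) hy)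
  -- upper bound
  have hub : ∀ M : Finset (Sym2 V), G.IsMatchingSet M → M.card ≤ X.card + t := by
    intro M hM
    have hTcard : ((X.image (fun x => s(x, x))) ∪ Z.image (fun z => s(z, pair z))).card
        = X.card + t := by
      have hdisj : Disjoint (X.image (fun x => s(x, x)))
          (Z.image (fun z => s(z, pair z))) := by
        rw [Finset.disjoint_left]
        rintro e he he'
        obtain ⟨x, hx, rfl⟩ := Finset.mem_image.mp he
        obtain ⟨z, hz, heq⟩ := Finset.mem_image.mp he'
        rcases Sym2.eq_iff.mp heq with ⟨h1, h2⟩ | ⟨h1, h2⟩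
        · exact (hZ z hz).2.1 (h2.trans h1.symm)
        · exact (hZ z hz).2.1 (h2.trans h1.symm)
      rw [Finset.card_union_of_disjoint hdisj, htriCard]
      congr 1
      apply Finset.card_image_of_injOn
      intro x hx x' hx' heq
      rcases Sym2.eq_iff.mp heq with ⟨h1, _⟩ | ⟨h1, _⟩ <;> exact h1
    rw [← hTcard]
    set ψ : Sym2 V → Sym2 V := fun e =>
      if (Quot.out e).1 ∈ X then s((Quot.out e).1, (Quot.out e).1)
      else if (Quot.out e).2 ∈ X then s((Quot.out e).2, (Quot.out e).2)
      else if (Quot.out e).1 ∈ Z then s((Quot.out e).1, pair (Quot.out e).1)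
      else s((Quot.out e).2, pair (Quot.out e).2) with hpsidef
    have hψ : ∀ e ∈ M, (∃ x ∈ X, x ∈ e ∧ ψ e = s(x, x)) ∨
        (∃ z ∈ Z, z ∈ e ∧ ψ e = s(z, pair z)) := by
      intro e he
      have heE := hM.1 e he
      have hae : (Quot.out e).1 ∈ e := Sym2.out_fst_mem e
      have hbe : (Quot.out e).2 ∈ e := Sym2.out_snd_mem e
      have hab : G.Adj (Quot.out e).1 (Quot.out e).2 := by
        have hse : s((Quot.out e).1, (Quot.out e).2) = e := Quot.out_eq e
        have : s((Quot.out e).1, (Quot.out e).2) ∈ G.edgeSet := by rw [hse]; exact heE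
        exact this
      by_cases h1 : (Quot.out e).1 ∈ X
      · refine Or.inl ⟨(Quot.out e).1, h1, hae, ?_⟩
        simp only [hpsidef]
        rw [if_pos h1]
      · by_cases h2 : (Quot.out e).2 ∈ X
        · refine Or.inl ⟨(Quot.out e).2, h2, hbe, ?_⟩
          simp only [hpsidef]
          rw [if_neg h1, if_pos h2]
        · by_cases h3 : (Quot.out e).1 ∈ Z
          · refine Or.inr ⟨(Quot.out e).1, h3, hae, ?_⟩
            simp only [hpsidef]
            rw [if_neg h1, if_neg h2, if_pos h3]
          · have haY : (Quot.out e).1 ∈ Y := by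
              have hmem : (Quot.out e).1 ∈ X ∪ Y ∪ Z := by
                rw [hunion]; exact Finset.mem_univ _
              rcases Finset.mem_union.mp hmem with h | h
              · rcases Finset.mem_union.mp h with h | h
                · exact absurd h h1
                · exact h
              · exact absurd h h3
            have hbZ : (Quot.out e).2 ∈ Z := by
              have hmem : (Quot.out e).2 ∈ X ∪ Y ∪ Z := by
                rw [hunion]; exact Finset.mem_univ _
              rcases Finset.mem_union.mp hmem with h | h
              · rcases Finset.mem_union.mp h with h | h
                · exact absurd h h2
                · exact absurd hab (hYY _ haY _ h)
              · exact h
            refine Or.inr ⟨(Quot.out e).2, hbZ, hbe, ?_⟩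
            simp only [hpsidef]
            rw [if_neg h1, if_neg h2, if_neg h3]
    apply Finset.card_le_card_of_injOn ψ
    · -- maps to
      intro e he
      rcases hψ e he with ⟨x, hx, _, hex⟩ | ⟨z, hz, _, hez⟩
      · exact Finset.mem_union_left _ (Finset.mem_image.mpr ⟨x, hx, hex.symm⟩)
      · exact Finset.mem_union_right _ (Finset.mem_image.mpr ⟨z, hz, hez.symm⟩)
    · -- injective on M
      intro e he g hg heq
      rw [Finset.mem_coe] at he hg
      by_contra hne
      rcases hψ e he with ⟨x, hx, hxe, hex⟩ | ⟨z, hz, hze, hez⟩ <;>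
        rcases hψ g hg with ⟨x', hx', hxg, hgx⟩ | ⟨z', hz', hzg, hgz⟩
      · -- diag / diag
        have hxx : x = x' := by
          have h := hex.symm.trans (heq.trans hgx)
          rcases Sym2.eq_iff.mp h with ⟨h1, _⟩ | ⟨h1, _⟩ <;> exact h1
        exact hM.2 e he g hg hne x hxe (hxx ▸ hxg)
      · -- diag / tri
        have h := hex.symm.trans (heq.trans hgz)
        rcases Sym2.eq_iff.mp h with ⟨h1, h2⟩ | ⟨h1, h2⟩
        · exact (hZ z' hz').2.1 (h2.symm.trans h1)
        · exact (hZ z' hz').2.1 (h1.symm.trans h2)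
      · -- tri / diag
        have h := hgx.symm.trans (heq.symm.trans hez)
        rcases Sym2.eq_iff.mp h with ⟨h1, h2⟩ | ⟨h1, h2⟩
        · exact (hZ z hz).2.1 (h2.symm.trans h1)
        · exact (hZ z hz).2.1 (h1.symm.trans h2)
      · -- tri / tri
        have h := hez.symm.trans (heq.trans hgz)
        rcases Sym2.eq_iff.mp h with ⟨h1, h2⟩ | ⟨h1, h2⟩
        · -- z = z'
          exact hM.2 e he g hg hne z hze (h1 ▸ hzg)
        · -- z = pair z', pair z = z'
          rcases hcont e (hM.1 e he) z hz hze with rfl | rfl <;>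
            rcases hcont g (hM.1 g hg) z' hz' hzg with rfl | rfl
          · -- e = s(z, pair z), g = s(z', pair z')
            exact hM.2 _ he _ hg hne (pair z)
              (Sym2.mem_mk_right z (pair z)) (h2 ▸ Sym2.mem_mk_left z' (pair z'))
          · -- e = s(z, pair z), g = s(z', att z')
            exact hM.2 _ he _ hg hne (pair z)
              (Sym2.mem_mk_right z (pair z)) (h2 ▸ Sym2.mem_mk_left z' (att z'))
          · -- e = s(z, att z), g = s(z', pair z')
            exact hM.2 _ he _ hg hne z (Sym2.mem_mk_left z (att z))
              (by rw [h1]; exact Sym2.mem_mk_right z' (pair z'))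
          · -- e = s(z, att z), g = s(z', att z')
            have hatt : att z' = att z := by
              rw [← h2, (hZ z hz).2.2.2.2.1]
            exact hM.2 _ he _ hg hne (att z) (Sym2.mem_mk_right z (att z))
              (by rw [← hatt]; exact Sym2.mem_mk_right z' (att z'))
  -- conclusion
  have hbddM : ∀ n ∈ {n | ∃ M : Finset (Sym2 V), G.IsMatchingSet M ∧ M.card = n},
      n ≤ X.card + t := by
    rintro n ⟨M, hM, rfl⟩
    exact hub M hM
  have hbddI : ∀ n ∈ {n | ∃ M : Finset (Sym2 V), G.IsInducedMatchingSet M ∧ M.card = n},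
      n ≤ X.card + t := by
    rintro n ⟨M, hM, rfl⟩
    exact hub M hM.1
  have hwitM : (X.card + t) ∈ {n | ∃ M : Finset (Sym2 V), G.IsMatchingSet M ∧ M.card = n} :=
    ⟨M0, hM0ind.1, hM0card⟩
  have hwitI : (X.card + t) ∈
      {n | ∃ M : Finset (Sym2 V), G.IsInducedMatchingSet M ∧ M.card = n} :=
    ⟨M0, hM0ind, hM0card⟩
  constructor
  · exact le_antisymm (csSup_le ⟨_, hwitM⟩ hbddM) (le_csSup ⟨X.card + t, hbddM⟩ hwitM)
  · exact le_antisymm (csSup_le ⟨_, hwitI⟩ hbddI) (le_csSup ⟨X.card + t, hbddI⟩ hwitI)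
end

section
/- Let G be a finite connected simple graph with at least one edge such that ν(G) = ν₀(G). Then G contains no cycle of length 5 (as a subgraph). -/
open scoped Classical

/-- A finite connected simple graph with at least one edge satisfying `ν(G) = ν₀(G)`
(i.e. a Cameron–Walker graph) contains no cycle of length 5 as a subgraph: there are no
five distinct vertices `v₁, …, v₅` with `v₁v₂, v₂v₃, v₃v₄, v₄v₅, v₅v₁` all edges of `G`. -/
theorem cameron_walker_C5_free {V : Type*} [Fintype V] (G : SimpleGraph V)
    (hconn : G.Connected) (hne : G.edgeSet.Nonempty)
    (hCW : G.matchingNumber = G.inducedMatchingNumber) :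
    ¬ ∃ c : ZMod 5 → V, Function.Injective c ∧
      ∀ i : ZMod 5, G.Adj (c i) (c (i + 1)) := by
  rintro ⟨c, hinj, hadj⟩
  classical
  have hbddM : BddAbove {n | ∃ M : Finset (Sym2 V), G.IsMatchingSet M ∧ M.card = n} :=
    ⟨Fintype.card (Sym2 V), by rintro n ⟨M, _, rfl⟩; exact Finset.card_le_univ M⟩
  have hbddI : BddAbove {n | ∃ M : Finset (Sym2 V), G.IsInducedMatchingSet M ∧ M.card = n} :=
    ⟨Fintype.card (Sym2 V), by rintro n ⟨M, _, rfl⟩; exact Finset.card_le_univ M⟩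
  have hneI : {n | ∃ M : Finset (Sym2 V), G.IsInducedMatchingSet M ∧ M.card = n}.Nonempty :=
    ⟨0, ∅, ⟨⟨by simp, by simp⟩, by simp⟩, rfl⟩
  obtain ⟨M, hM, hMcard⟩ := Nat.sSup_mem hneI hbddI
  -- M is a maximum matching
  have hmax : ∀ M' : Finset (Sym2 V), G.IsMatchingSet M' → M'.card ≤ M.card := by
    intro M' h
    have h1 : M'.card ≤ G.matchingNumber := le_csSup hbddM ⟨M', h, rfl⟩
    rw [hCW] at h1
    exact h1.trans_eq hMcard.symm
  have hMm := hM.1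
  -- covered vertices
  set cov : V → Prop := fun v => ∃ e ∈ M, v ∈ e with hcovdef
  -- no two adjacent uncovered vertices
  have huncov : ∀ u v : V, G.Adj u v → cov u ∨ cov v := by
    intro u v huv
    by_contra hc
    push_neg at hc
    obtain ⟨hcu, hcv⟩ := hc
    have hnotmem : s(u, v) ∉ M := fun h => hcu ⟨_, h, Sym2.mem_mk_left u v⟩
    have hmatch : G.IsMatchingSet (insert s(u, v) M) := by
      constructor
      · intro e he
        rcases Finset.mem_insert.1 he with rfl | he
        · exact huv
        · exact hMm.1 e he
      · intro e he f hf hef w hwe hwf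
        rcases Finset.mem_insert.1 he with he' | he'
        · rcases Finset.mem_insert.1 hf with hf' | hf'
          · exact hef (he'.trans hf'.symm)
          · subst he'
            rcases Sym2.mem_iff.1 hwe with rfl | rfl
            · exact hcu ⟨f, hf', hwf⟩
            · exact hcv ⟨f, hf', hwf⟩
        · rcases Finset.mem_insert.1 hf with hf' | hf'
          · subst hf'
            rcases Sym2.mem_iff.1 hwf with rfl | rfl
            · exact hcu ⟨e, he', hwe⟩
            · exact hcv ⟨e, he', hwe⟩
          · exact hMm.2 e he' f hf' hef w hwe hwf
    have := hmax _ hmatch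
    rw [Finset.card_insert_of_notMem hnotmem] at this
    omega
  have hne5 : ∀ i j : ZMod 5, i ≠ j → c i ≠ c j := fun i j h hc => h (hinj hc)
  -- some consecutive pair both covered
  have key : ∀ b : ZMod 5 → Bool, (∀ i, b i || b (i+1)) → ∃ i, b i && b (i+1) := by decide
  obtain ⟨i, hbi⟩ := key (fun i => decide (cov (c i)))
    (by
      intro i
      rcases huncov _ _ (hadj i) with h | h
      · simp [h]
      · simp [h])
  rw [Bool.and_eq_true, decide_eq_true_iff, decide_eq_true_iff] at hbi
  obtain ⟨⟨e, he, hie⟩, ⟨f, hf, hif⟩⟩ := hbi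
  -- index inequalities
  have hidx : ∀ a b : ZMod 5, a ≠ b → i + a ≠ i + b := fun a b h hh => h (add_left_cancel hh)
  have hz : ∀ a : ZMod 5, a ≠ 0 → i + a ≠ i := by
    intro a ha hh
    exact hidx a 0 ha (by rwa [add_zero])
  have e01 : i ≠ i + 1 := fun h => hz 1 (by decide) h.symm
  have e20 : i + 2 ≠ i := hz 2 (by decide)
  have e21 : i + 2 ≠ i + 1 := hidx 2 1 (by decide)
  have e40 : i + 4 ≠ i := hz 4 (by decide)
  have e41 : i + 4 ≠ i + 1 := hidx 4 1 (by decide)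
  have e14 : i + 1 ≠ i + 4 := hidx 1 4 (by decide)
  have e10 : i + 1 ≠ i := hz 1 (by decide)
  have e24 : i + 2 ≠ i + 4 := hidx 2 4 (by decide)
  -- normalized adjacencies
  have hadj2 : G.Adj (c (i+1)) (c (i+2)) := by
    have := hadj (i+1)
    rwa [add_assoc, show (1:ZMod 5) + 1 = 2 by decide] at this
  have hadj4 : G.Adj (c (i+4)) (c i) := by
    have := hadj (i+4)
    rwa [add_assoc, show (4:ZMod 5) + 1 = 0 by decide, add_zero] at this
  -- e = f, and it is the cycle edge
  have hef : e = f := by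
    by_contra hef
    exact hM.2 e he f hf hef (c i) (c (i+1)) hie hif (hadj i)
  subst hef
  have hecyc : e = s(c i, c (i+1)) :=
    (Sym2.mem_and_mem_iff (hne5 i (i+1) e01)).1 ⟨hie, hif⟩
  -- c (i+2) and c (i+4) are uncovered
  have hu2 : ¬ cov (c (i+2)) := by
    rintro ⟨f, hf, hmem⟩
    have hfe : f ≠ e := by
      rintro rfl
      rw [hecyc] at hmem
      rcases Sym2.mem_iff.1 hmem with h | h
      · exact hne5 (i+2) i e20 h
      · exact hne5 (i+2) (i+1) e21 h
    exact hM.2 e he f hf (Ne.symm hfe) (c (i+1)) (c (i+2)) hif hmem hadj2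
  have hu4 : ¬ cov (c (i+4)) := by
    rintro ⟨f, hf, hmem⟩
    have hfe : f ≠ e := by
      rintro rfl
      rw [hecyc] at hmem
      rcases Sym2.mem_iff.1 hmem with h | h
      · exact hne5 (i+4) i e40 h
      · exact hne5 (i+4) (i+1) e41 h
    exact hM.2 e he f hf (Ne.symm hfe) (c i) (c (i+4)) hie hmem hadj4.symm
  -- build a bigger matching
  set A : Sym2 V := s(c (i+1), c (i+2)) with hA
  set B : Sym2 V := s(c (i+4), c i) with hB
  have hAmem : ∀ v, v ∈ A → v = c (i+1) ∨ v = c (i+2) := fun v hv => Sym2.mem_iff.1 hv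
  have hBmem : ∀ v, v ∈ B → v = c (i+4) ∨ v = c i := fun v hv => Sym2.mem_iff.1 hv
  set M' : Finset (Sym2 V) := insert A (insert B (M.erase e)) with hM'
  have hmatch' : G.IsMatchingSet M' := by
    constructor
    · intro g hg
      rcases Finset.mem_insert.1 hg with rfl | hg
      · exact (G.mem_edgeSet).2 hadj2
      rcases Finset.mem_insert.1 hg with rfl | hg
      · exact (G.mem_edgeSet).2 hadj4
      · exact hMm.1 g (Finset.mem_of_mem_erase hg)
    · intro g hg h hh hgh v hvg hvh
      have key1 : ∀ h ∈ M.erase e, v ∈ A → v ∉ h := by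
        intro h hh hvA hvh
        obtain ⟨hhe, hhM⟩ := Finset.mem_erase.1 hh
        rcases hAmem v hvA with h1 | h1
        · exact hMm.2 e he h hhM (Ne.symm hhe) _ hif (h1 ▸ hvh)
        · exact hu2 ⟨h, hhM, h1 ▸ hvh⟩
      have key2 : ∀ h ∈ M.erase e, v ∈ B → v ∉ h := by
        intro h hh hvB hvh
        obtain ⟨hhe, hhM⟩ := Finset.mem_erase.1 hh
        rcases hBmem v hvB with h1 | h1
        · exact hu4 ⟨h, hhM, h1 ▸ hvh⟩
        · exact hMm.2 e he h hhM (Ne.symm hhe) _ hie (h1 ▸ hvh)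
      have keyAB : v ∈ A → v ∈ B → False := by
        intro hvA hvB
        rcases hAmem v hvA with h1 | h1
        · rcases hBmem v hvB with h2 | h2
          · exact hne5 (i+1) (i+4) e14 (h1 ▸ h2)
          · exact hne5 (i+1) i e10 (h1 ▸ h2)
        · rcases hBmem v hvB with h2 | h2
          · exact hne5 (i+2) (i+4) e24 (h1 ▸ h2)
          · exact hne5 (i+2) i e20 (h1 ▸ h2)
      rcases Finset.mem_insert.1 hg with hg' | hg'
      · rcases Finset.mem_insert.1 hh with hh' | hh'
        · exact hgh (hg'.trans hh'.symm)
        rcases Finset.mem_insert.1 hh' with hh'' | hh''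
        · exact keyAB (hg' ▸ hvg) (hh'' ▸ hvh)
        · exact key1 h hh'' (hg' ▸ hvg) hvh
      rcases Finset.mem_insert.1 hg' with hg'' | hg''
      · rcases Finset.mem_insert.1 hh with hh' | hh'
        · exact keyAB (hh' ▸ hvh) (hg'' ▸ hvg)
        rcases Finset.mem_insert.1 hh' with hh'' | hh''
        · exact hgh (hg''.trans hh''.symm)
        · exact key2 h hh'' (hg'' ▸ hvg) hvh
      · rcases Finset.mem_insert.1 hh with hh' | hh'
        · exact key1 g hg'' (hh' ▸ hvh) hvg
        rcases Finset.mem_insert.1 hh' with hh'' | hh''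
        · exact key2 g hg'' (hh'' ▸ hvh) hvg
        · exact hMm.2 g (Finset.mem_of_mem_erase hg'') h (Finset.mem_of_mem_erase hh'')
            hgh v hvg hvh
  -- cardinality of M'
  have hBnotmem : B ∉ M.erase e := fun h =>
    hu4 ⟨B, Finset.mem_of_mem_erase h, Sym2.mem_mk_left _ _⟩
  have hAnotmem : A ∉ insert B (M.erase e) := by
    intro h
    rcases Finset.mem_insert.1 h with h | h
    · have hm1 : c (i+1) ∈ B := h ▸ Sym2.mem_mk_left _ _
      rcases hBmem _ hm1 with h' | h'
      · exact hne5 (i+1) (i+4) e14 h'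
      · exact hne5 (i+1) i e10 h'
    · exact hu2 ⟨A, Finset.mem_of_mem_erase h, Sym2.mem_mk_right _ _⟩
  have hcard' : M'.card = M.card + 1 := by
    rw [hM', Finset.card_insert_of_notMem hAnotmem,
      Finset.card_insert_of_notMem hBnotmem, Finset.card_erase_of_mem he]
    have : 1 ≤ M.card := Finset.card_pos.2 ⟨e, he⟩
    omega
  have := hmax M' hmatch'
  omega
end
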